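/- arXiv:2206.03587 — 11 statements merged into one kernel-verified Lean document; each statement's English description precedes it below -/
import Mathlib

section
/- Let G be a finite connected simple graph and L an ABC-function on G. Then for any profile π, any vertex x of G, and any vertex x' ∈ L(π,x) (where (π,x) denotes the profile π with one occurrence of x appended), we have x' ∈ L(π,x') and L(π,x') ⊆ L(π,x). -/
namespace ArxivABC

variable {V : Type*}

/-- The metric interval `I(u,v)` between two vertices `u` and `v`. -/
def interval (G : SimpleGraph V) (u v : V) : Set V :=
  {w | G.dist u w + G.dist w v = G.dist u v}

/-- An ABC-function on `G`: a consensus function (profiles are finite multisets of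
vertices, so anonymity (A) is built in) returning nonempty sets of vertices, and satisfying
betweenness (B) and consistency (C). -/
structure IsABC (G : SimpleGraph V) (L : Multiset V → Set V) : Prop where
  nonempty : ∀ π : Multiset V, (L π).Nonempty
  betweenness : ∀ u v : V, L {u, v} = interval G u v
  consistency : ∀ π ρ : Multiset V, (L π ∩ L ρ).Nonempty → L (π + ρ) = L π ∩ L ρ

/-- The total distance `F_π(v)` of a vertex `v` with respect to a profile `π`. -/
noncomputable def cost (G : SimpleGraph V) (π : Multiset V) (v : V) : ℕ :=
  (π.map (G.dist v)).sum

/-- The median set of a profile. -/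
def median (G : SimpleGraph V) (π : Multiset V) : Set V :=
  {v | ∀ w, cost G π v ≤ cost G π w}

/-- Any vertex is in the interval from itself to another vertex. -/
lemma left_mem_interval (G : SimpleGraph V) (u v : V) : u ∈ interval G u v := by
  simp [interval, SimpleGraph.dist_self]

/-- Any vertex is in the interval from another vertex to itself. -/
lemma right_mem_interval (G : SimpleGraph V) (u v : V) : v ∈ interval G u v := by
  simp [interval, SimpleGraph.dist_self]

/-- Lemma 1: for an ABC-function `L`, any profile `π`, any vertex `x`, and any
`x' ∈ L(π, x)`, we have `x' ∈ L(π, x')` and `L(π, x') ⊆ L(π, x)`. -/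
theorem stmt_0 [Fintype V] (G : SimpleGraph V) (hG : G.Connected)
    (L : Multiset V → Set V) (hL : IsABC G L)
    (π : Multiset V) (x x' : V) (hx' : x' ∈ L (x ::ₘ π)) :
    x' ∈ L (x' ::ₘ π) ∧ L (x' ::ₘ π) ⊆ L (x ::ₘ π) := by
  have key : ∀ y ∈ L (x' ::ₘ π),
      L (x' ::ₘ π) ∩ interval G x y = L (x ::ₘ π) ∩ interval G x' y := by
    intro y hy
    have h1 := hL.consistency (x' ::ₘ π) {x, y}
      ⟨y, hy, by rw [hL.betweenness]; exact right_mem_interval G x y⟩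
    have h2 := hL.consistency (x ::ₘ π) {x', y}
      ⟨x', hx', by rw [hL.betweenness]; exact left_mem_interval G x' y⟩
    rw [hL.betweenness] at h1 h2
    have heq : (x' ::ₘ π) + ({x, y} : Multiset V) = (x ::ₘ π) + ({x', y} : Multiset V) := by
      classical
      refine Multiset.ext.2 fun a => ?_
      simp only [Multiset.count_add, Multiset.count_cons, Multiset.insert_eq_cons,
        Multiset.count_singleton]
      split_ifs <;> omega
    rw [heq, h2] at h1
    exact h1.symm
  obtain ⟨y, hy⟩ := hL.nonempty (x' ::ₘ π)
  have hA : x' ∈ L (x' ::ₘ π) := by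
    have h := key y hy
    have : x' ∈ L (x ::ₘ π) ∩ interval G x' y := ⟨hx', left_mem_interval G x' y⟩
    rw [← h] at this
    exact this.1
  refine ⟨hA, fun z hz => ?_⟩
  have h := key z hz
  have : z ∈ L (x' ::ₘ π) ∩ interval G x z := ⟨hz, right_mem_interval G x z⟩
  rw [h] at this
  exact this.1

end ArxivABC
end

section
/- Let G be a finite connected simple graph satisfying the triangle condition, and let L be an ABC-function on G satisfying axiom (T⁻): for any three pairwise adjacent vertices u,v,w, if u ∈ L(u,v,w) then {u,v,w} ⊆ L(u,v,w). Then L satisfies axiom (T): for any three pairwise adjacent vertices u,v,w, L(u,v,w) = {u,v,w}. -/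
namespace ArxivABC

variable {V : Type*}

/-- The triangle condition TC: for vertices `u, v, w` with `v ∼ w` and
`d(u,v) = d(u,w) ≥ 1`, there is a common neighbor `x` of `v` and `w` with
`d(u,x) = d(u,v) - 1`. -/
def TriangleCondition (G : SimpleGraph V) : Prop :=
  ∀ u v w : V, G.Adj v w → G.dist u v = G.dist u w → 1 ≤ G.dist u v →
    ∃ x : V, G.Adj v x ∧ G.Adj w x ∧ G.dist u x + 1 = G.dist u v

/-- If `G` satisfies the triangle condition and `L` is an ABC-function satisfying
axiom (T⁻), then `L` satisfies axiom (T). -/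
theorem stmt_2 [Fintype V] (G : SimpleGraph V) (hG : G.Connected)
    (hTC : TriangleCondition G)
    (L : Multiset V → Set V) (hL : IsABC G L)
    (hTminus : ∀ u v w : V, G.Adj u v → G.Adj u w → G.Adj v w →
      u ∈ L {u, v, w} → ({u, v, w} : Set V) ⊆ L {u, v, w}) :
    ∀ u v w : V, G.Adj u v → G.Adj u w → G.Adj v w →
      L {u, v, w} = ({u, v, w} : Set V) := by
  classical
  have key : ∀ (π ρ : Multiset V) (t : V), t ∈ L π → t ∈ L ρ → L (π + ρ) = L π ∩ L ρ :=
    fun π ρ t h1 h2 => hL.consistency π ρ ⟨t, h1, h2⟩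
  -- singletons
  have hsingle : ∀ a : V, L {a} = {a} := by
    intro a
    obtain ⟨t, ht⟩ := hL.nonempty {a}
    have h := key {a} {a} t ht ht
    have h2 : ({a} : Multiset V) + {a} = ({a, a} : Multiset V) := rfl
    have h3 : interval G a a = ({a} : Set V) := by
      ext z
      simp only [interval, Set.mem_setOf_eq, Set.mem_singleton_iff]
      constructor
      · intro hz
        have e0 : G.dist a a = 0 := SimpleGraph.dist_self
        have h0 : G.dist a z = 0 := by omega
        exact (hG.dist_eq_zero_iff.mp h0).symm
      · rintro rfl
        simp [SimpleGraph.dist_self]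
    rw [h2, hL.betweenness a a, h3, Set.inter_self] at h
    exact h.symm
  intro u v w huv huw hvw
  have hd1 : ∀ {a b : V}, G.Adj a b → G.dist a b = 1 :=
    fun h => SimpleGraph.dist_eq_one_iff_adj.mpr h
  -- Step 1 : L {u,v,w} ⊆ {u,v,w}
  have hsub : L {u, v, w} ⊆ ({u, v, w} : Set V) := by
    intro x hx
    by_contra hxn
    simp only [Set.mem_insert_iff, Set.mem_singleton_iff] at hxn
    push_neg at hxn
    obtain ⟨hxu, hxv, hxw⟩ := hxn
    have hxLx : x ∈ L {x} := by rw [hsingle]; rfl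
    have hTx : L (({u, v, w} : Multiset V) + {x}) = L {u, v, w} ∩ L {x} :=
      key _ _ x hx hxLx
    -- the "unequal distances" case
    have main1a : ∀ a b c : V, ({a, b, c} : Multiset V) = {u, v, w} → G.Adj a b → x ≠ b →
        G.dist a x = G.dist b x + 1 → False := by
      intro a b c hperm hab hxb hdd
      have hmem1 : b ∈ L {a, x} := by
        rw [hL.betweenness]
        show G.dist a b + G.dist b x = G.dist a x
        rw [hd1 hab]; omega
      have hmem2 : b ∈ L {b, c} := by
        rw [hL.betweenness]
        show G.dist b b + G.dist b c = G.dist b c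
        rw [SimpleGraph.dist_self]; omega
      have h2 : L (({a, x} : Multiset V) + {b, c}) = L {a, x} ∩ L {b, c} :=
        key _ _ b hmem1 hmem2
      have hm : ({a, x} : Multiset V) + {b, c} = ({u, v, w} : Multiset V) + {x} := by
        rw [← hperm]
        ext t
        simp [Multiset.count_cons, Multiset.count_singleton]
        split_ifs <;> omega
      rw [hm, hTx] at h2
      have hbmem : b ∈ L {u, v, w} ∩ L {x} := by
        rw [h2]; exact ⟨hmem1, hmem2⟩
      have hbx : b ∈ L {x} := hbmem.2
      rw [hsingle] at hbx
      exact hxb (Set.mem_singleton_iff.mp hbx).symm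
    -- triangle inequalities
    have tri : ∀ {a b : V}, G.Adj a b → G.dist a x ≤ G.dist b x + 1 := by
      intro a b hab
      calc G.dist a x ≤ G.dist a b + G.dist b x := hG.dist_triangle
        _ = G.dist b x + 1 := by rw [hd1 hab]; omega
    have t1 := tri huv
    have t2 := tri huv.symm
    have t3 := tri huw
    have t4 := tri huw.symm
    have t5 := tri hvw
    have t6 := tri hvw.symm
    have hdu0 : G.dist u x ≠ 0 := fun h0 => hxu (hG.dist_eq_zero_iff.mp h0).symm
    by_cases heq : G.dist u x = G.dist v x ∧ G.dist v x = G.dist w x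
    · -- all distances equal to k ≥ 1
      obtain ⟨hduv, hdvw⟩ := heq
      -- Claim A : x ∉ L {u,v,x}
      have hxρ : x ∉ L {u, v, x} := by
        intro hxin
        by_cases hk : G.dist u x = 1
        · -- k = 1 : use T⁻ on the triangle x,u,v
          have hux : G.Adj u x := SimpleGraph.dist_eq_one_iff_adj.mp hk
          have hvx : G.Adj v x := SimpleGraph.dist_eq_one_iff_adj.mp (by omega)
          have hperm : ({x, u, v} : Multiset V) = {u, v, x} := by
            ext t
            simp [Multiset.count_cons, Multiset.count_singleton]
            split_ifs <;> omega
          have hTm := hTminus x u v hux.symm hvx.symm huv (by rw [hperm]; exact hxin)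
          have huin : u ∈ L {u, v, x} := by
            have h := hTm (by simp : u ∈ ({x, u, v} : Set V))
            rwa [hperm] at h
          have hxM : x ∈ L {u, x} := by
            rw [hL.betweenness]
            show G.dist u x + G.dist x x = G.dist u x
            rw [SimpleGraph.dist_self]; omega
          have h1 : L (({u, v, w} : Multiset V) + {u, x}) = L {u, v, w} ∩ L {u, x} :=
            key _ _ x hx hxM
          have huM : u ∈ L {u, w} := by
            rw [hL.betweenness]
            show G.dist u u + G.dist u w = G.dist u w
            rw [SimpleGraph.dist_self]; omega
          have h2 : L (({u, v, x} : Multiset V) + {u, w}) = L {u, v, x} ∩ L {u, w} :=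
            key _ _ u huin huM
          have hm : ({u, v, x} : Multiset V) + {u, w} = ({u, v, w} : Multiset V) + {u, x} := by
            ext t
            simp [Multiset.count_cons, Multiset.count_singleton]
            split_ifs <;> omega
          rw [hm, h1] at h2
          have hxmem : x ∈ L {u, v, x} ∩ L {u, w} := by
            rw [← h2]; exact ⟨hx, hxM⟩
          have hxI : x ∈ L {u, w} := hxmem.2
          rw [hL.betweenness] at hxI
          have hxI' : G.dist u x + G.dist x w = G.dist u w := hxI
          have e1 : G.dist u w = 1 := hd1 huw
          have e2 : G.dist x w = G.dist w x := SimpleGraph.dist_comm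
          omega
        · -- k ≥ 2 : use TC to get a common neighbor p of u,v closer to x
          have cxu : G.dist x u = G.dist u x := SimpleGraph.dist_comm
          have cxv : G.dist x v = G.dist v x := SimpleGraph.dist_comm
          obtain ⟨p, hup, hvp, hpd⟩ := hTC x u v huv (by omega) (by omega)
          have cpx : G.dist p x = G.dist x p := SimpleGraph.dist_comm
          have hpmem1 : p ∈ L {u, x} := by
            rw [hL.betweenness]
            show G.dist u p + G.dist p x = G.dist u x
            have := hd1 hup
            omega
          have hpmem2 : p ∈ L {v, x} := by
            rw [hL.betweenness]
            show G.dist v p + G.dist p x = G.dist v x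
            have := hd1 hvp
            omega
          have hxm1 : x ∈ L {u, x} := by
            rw [hL.betweenness]
            show G.dist u x + G.dist x x = G.dist u x
            rw [SimpleGraph.dist_self]; omega
          have hxm2 : x ∈ L {v, x} := by
            rw [hL.betweenness]
            show G.dist v x + G.dist x x = G.dist v x
            rw [SimpleGraph.dist_self]; omega
          have h2 : L (({u, x} : Multiset V) + {v, x}) = L {u, x} ∩ L {v, x} :=
            key _ _ x hxm1 hxm2
          have h1 : L (({u, v, x} : Multiset V) + {x}) = L {u, v, x} ∩ L {x} :=
            key _ _ x hxin hxLx
          have hm : ({u, v, x} : Multiset V) + {x} = ({u, x} : Multiset V) + {v, x} := by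
            ext t
            simp [Multiset.count_cons, Multiset.count_singleton]
            split_ifs <;> omega
          rw [hm, h2] at h1
          have hp_in : p ∈ L {u, v, x} ∩ L {x} := by
            rw [← h1]; exact ⟨hpmem1, hpmem2⟩
          have hp_x : p ∈ L {x} := hp_in.2
          rw [hsingle] at hp_x
          have hpx : p = x := Set.mem_singleton_iff.mp hp_x
          rw [hpx, SimpleGraph.dist_self] at hpd
          omega
      -- Claim B : but any element of L {u,v,x} forces x ∈ L {u,v,x}
      obtain ⟨s, hs⟩ := hL.nonempty {u, v, x}
      apply hxρ
      have hxm : x ∈ L {s, x} := by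
        rw [hL.betweenness]
        show G.dist s x + G.dist x x = G.dist s x
        rw [SimpleGraph.dist_self]; omega
      have h1 : L (({u, v, w} : Multiset V) + {s, x}) = L {u, v, w} ∩ L {s, x} :=
        key _ _ x hx hxm
      have hsm : s ∈ L {w, s} := by
        rw [hL.betweenness]
        show G.dist w s + G.dist s s = G.dist w s
        rw [SimpleGraph.dist_self]; omega
      have h2 : L (({u, v, x} : Multiset V) + {w, s}) = L {u, v, x} ∩ L {w, s} :=
        key _ _ s hs hsm
      have hm : ({u, v, x} : Multiset V) + {w, s} = ({u, v, w} : Multiset V) + {s, x} := by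
        ext t
        simp [Multiset.count_cons, Multiset.count_singleton]
        split_ifs <;> omega
      rw [hm, h1] at h2
      have hxmem : x ∈ L {u, v, x} ∩ L {w, s} := by
        rw [← h2]; exact ⟨hx, hxm⟩
      exact hxmem.1
    · -- some pair of distances differs by one
      have h6 : G.dist u x = G.dist v x + 1 ∨ G.dist v x = G.dist u x + 1 ∨
          G.dist u x = G.dist w x + 1 ∨ G.dist w x = G.dist u x + 1 ∨
          G.dist v x = G.dist w x + 1 ∨ G.dist w x = G.dist v x + 1 := by
        omega
      have pm1 : ({v, u, w} : Multiset V) = {u, v, w} := by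
        ext t
        simp [Multiset.count_cons, Multiset.count_singleton]
        split_ifs <;> omega
      have pm2 : ({u, w, v} : Multiset V) = {u, v, w} := by
        ext t
        simp [Multiset.count_cons, Multiset.count_singleton]
        split_ifs <;> omega
      have pm3 : ({w, u, v} : Multiset V) = {u, v, w} := by
        ext t
        simp [Multiset.count_cons, Multiset.count_singleton]
        split_ifs <;> omega
      have pm4 : ({v, w, u} : Multiset V) = {u, v, w} := by
        ext t
        simp [Multiset.count_cons, Multiset.count_singleton]
        split_ifs <;> omega
      have pm5 : ({w, v, u} : Multiset V) = {u, v, w} := by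
        ext t
        simp [Multiset.count_cons, Multiset.count_singleton]
        split_ifs <;> omega
      rcases h6 with h | h | h | h | h | h
      · exact main1a u v w rfl huv hxv h
      · exact main1a v u w pm1 huv.symm hxu h
      · exact main1a u w v pm2 huw hxw h
      · exact main1a w u v pm3 huw.symm hxu h
      · exact main1a v w u pm4 hvw hxw h
      · exact main1a w v u pm5 hvw.symm hxv h
  -- Step 2 : {u,v,w} ⊆ L {u,v,w} via T⁻
  obtain ⟨a, ha⟩ := hL.nonempty {u, v, w}
  have haT := hsub ha
  simp only [Set.mem_insert_iff, Set.mem_singleton_iff] at haT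
  have hsup : ({u, v, w} : Set V) ⊆ L {u, v, w} := by
    rcases haT with rfl | rfl | rfl
    · exact hTminus a v w huv huw hvw ha
    · have hmp : ({a, u, w} : Multiset V) = {u, a, w} := by
        ext t
        simp [Multiset.count_cons, Multiset.count_singleton]
        split_ifs <;> omega
      have h := hTminus a u w huv.symm hvw huw (by rw [hmp]; exact ha)
      rw [hmp] at h
      intro t ht
      apply h
      simp only [Set.mem_insert_iff, Set.mem_singleton_iff] at ht ⊢
      tauto
    · have hmp : ({a, u, v} : Multiset V) = {u, v, a} := by
        ext t
        simp [Multiset.count_cons, Multiset.count_singleton]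
        split_ifs <;> omega
      have h := hTminus a u v huw.symm hvw.symm huv (by rw [hmp]; exact ha)
      rw [hmp] at h
      intro t ht
      apply h
      simp only [Set.mem_insert_iff, Set.mem_singleton_iff] at ht ⊢
      tauto
  exact Set.Subset.antisymm hsub hsup

end ArxivABC
end

section
/- Let G be a finite connected simple graph satisfying the triangle condition and L an ABCT-function on G. Then for any edge uv of G and any vertex z with d(u,z) = d(v,z), we have u ∈ L(u,v,z) and v ∈ L(u,v,z). -/
namespace ArxivABC

variable {V : Type*}

/-- Axiom (T): for any three pairwise adjacent vertices `u, v, w`,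
`L(u,v,w) = {u,v,w}`. -/
def AxiomT (G : SimpleGraph V) (L : Multiset V → Set V) : Prop :=
  ∀ u v w : V, G.Adj u v → G.Adj u w → G.Adj v w →
    L {u, v, w} = ({u, v, w} : Set V)

section Helpers

variable {G : SimpleGraph V} {L : Multiset V → Set V}

lemma mem_interval_iff {a b w : V} :
    w ∈ interval G a b ↔ G.dist a w + G.dist w b = G.dist a b := Iff.rfl

lemma left_mem_interval_s3 (a b : V) : a ∈ interval G a b := by
  simp [interval]

lemma right_mem_interval_s3 (a b : V) : b ∈ interval G a b := by
  simp [interval]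

/-- consistency, fired by an explicit common element. -/
lemma fire (hL : IsABC G L) {π ρ : Multiset V} {s : V}
    (h1 : s ∈ L π) (h2 : s ∈ L ρ) : L (π + ρ) = L π ∩ L ρ :=
  hL.consistency π ρ ⟨s, h1, h2⟩

lemma L_single (hL : IsABC G L) (hG : G.Connected) (a : V) :
    L {a} = {a} := by
  have h1 : L ({a} + {a}) = L {a} ∩ L {a} := by
    obtain ⟨s, hs⟩ := hL.nonempty {a}
    exact fire hL hs hs
  have h2 : ({a} : Multiset V) + {a} = ({a, a} : Multiset V) := by
    simp only [Multiset.insert_eq_cons, ← Multiset.singleton_add]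
  have h3 : interval G a a = {a} := by
    ext w
    simp only [interval, Set.mem_setOf_eq, Set.mem_singleton_iff]
    constructor
    · intro h
      rw [G.dist_self] at h
      have : G.dist a w = 0 := by omega
      exact (hG.dist_eq_zero_iff.mp this).symm
    · rintro rfl; simp [G.dist_self]
  rw [h2, hL.betweenness, h3, Set.inter_self] at h1
  exact h1.symm

lemma interval_adj (hG : G.Connected) {a b : V} (hab : G.Adj a b) :
    interval G a b = ({a, b} : Set V) := by
  have hd : G.dist a b = 1 := SimpleGraph.dist_eq_one_iff_adj.mpr hab
  ext w
  simp only [interval, Set.mem_setOf_eq, Set.mem_insert_iff, Set.mem_singleton_iff, hd]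
  constructor
  · intro h
    rcases Nat.eq_zero_or_pos (G.dist a w) with h0 | h0
    · exact Or.inl (hG.dist_eq_zero_iff.mp h0).symm
    · right
      have : G.dist w b = 0 := by omega
      exact hG.dist_eq_zero_iff.mp this
  · rintro (rfl | rfl) <;> simp [G.dist_self, hd, SimpleGraph.dist_comm]

end Helpers

/-- Lemma 5: if `G` satisfies the triangle condition and `L` is an ABCT-function,
then for any edge `uv` and any vertex `z` equidistant from `u` and `v`, both `u` and
`v` belong to `L(u,v,z)`. -/
theorem stmt_3 [Fintype V] (G : SimpleGraph V) (hG : G.Connected)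
    (hTC : TriangleCondition G)
    (L : Multiset V → Set V) (hL : IsABC G L) (hT : AxiomT G L)
    (u v z : V) (huv : G.Adj u v) (hz : G.dist u z = G.dist v z) :
    u ∈ L {u, v, z} ∧ v ∈ L {u, v, z} := by
  have hduv : G.dist u v = 1 := SimpleGraph.dist_eq_one_iff_adj.mpr huv
  have hdvu : G.dist v u = 1 := by rw [SimpleGraph.dist_comm]; exact hduv
  -- k ≥ 1
  have hk : 1 ≤ G.dist u z := by
    rcases Nat.eq_zero_or_pos (G.dist u z) with h0 | h0
    · exfalso
      have huz : u = z := hG.dist_eq_zero_iff.mp h0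
      subst huz
      rw [SimpleGraph.dist_comm] at hz
      omega
    · exact h0
  -- obtain x from TC at z
  obtain ⟨x, hux, hvx, hxd⟩ := hTC z u v huv
    (by rw [SimpleGraph.dist_comm (u := z) (v := u), hz, SimpleGraph.dist_comm])
    (by rwa [SimpleGraph.dist_comm])
  -- hxd : G.dist z x + 1 = G.dist z u
  have hzu : G.dist z u = G.dist u z := SimpleGraph.dist_comm
  have hxz : G.dist x z = G.dist z x := SimpleGraph.dist_comm
  have hx_uz : x ∈ interval G u z := by
    rw [mem_interval_iff, SimpleGraph.dist_eq_one_iff_adj.mpr hux]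
    omega
  have hx_vz : x ∈ interval G v z := by
    rw [mem_interval_iff, SimpleGraph.dist_eq_one_iff_adj.mpr hvx]
    omega
  set π : Multiset V := {u, v, z} with hπ
  -- chain step A : from u or x in L π, get both u and x
  have chainA : ∀ s, s ∈ L π → (s = u ∨ s = x) → u ∈ L π ∧ x ∈ L π := by
    intro s hs hsux
    have e1 : L (π + {u, x}) = L π ∩ interval G u x := by
      rw [fire hL hs (show s ∈ L {u, x} by
        rw [hL.betweenness, interval_adj hG hux]
        rcases hsux with rfl | rfl <;> simp), hL.betweenness]
    have e2 : L ({u, v, x} + {u, z}) = ({u, v, x} : Set V) ∩ interval G u z := by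
      rw [fire hL (show u ∈ L {u, v, x} by rw [hT u v x huv hux hvx]; simp)
        (show u ∈ L {u, z} by rw [hL.betweenness]; exact left_mem_interval_s3 u z),
        hT u v x huv hux hvx, hL.betweenness]
    have hms : π + ({u, x} : Multiset V) = {u, v, x} + {u, z} := by
      rw [hπ]; simp only [Multiset.insert_eq_cons, ← Multiset.singleton_add]; abel
    have key : L π ∩ interval G u x = ({u, v, x} : Set V) ∩ interval G u z := by
      rw [← e1, ← e2, hms]
    constructor
    · have : u ∈ ({u, v, x} : Set V) ∩ interval G u z :=
        ⟨by simp, left_mem_interval_s3 u z⟩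
      rw [← key] at this
      exact this.1
    · have : x ∈ ({u, v, x} : Set V) ∩ interval G u z := ⟨by simp, hx_uz⟩
      rw [← key] at this
      exact this.1
  -- chain step B : from v or x in L π, get both v and x
  have chainB : ∀ s, s ∈ L π → (s = v ∨ s = x) → v ∈ L π ∧ x ∈ L π := by
    intro s hs hsvx
    have e1 : L (π + {v, x}) = L π ∩ interval G v x := by
      rw [fire hL hs (show s ∈ L {v, x} by
        rw [hL.betweenness, interval_adj hG hvx]
        rcases hsvx with rfl | rfl <;> simp), hL.betweenness]
    have e2 : L ({u, v, x} + {v, z}) = ({u, v, x} : Set V) ∩ interval G v z := by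
      rw [fire hL (show v ∈ L {u, v, x} by rw [hT u v x huv hux hvx]; simp)
        (show v ∈ L {v, z} by rw [hL.betweenness]; exact left_mem_interval_s3 v z),
        hT u v x huv hux hvx, hL.betweenness]
    have hms : π + ({v, x} : Multiset V) = {u, v, x} + {v, z} := by
      rw [hπ]; simp only [Multiset.insert_eq_cons, ← Multiset.singleton_add]; abel
    have key : L π ∩ interval G v x = ({u, v, x} : Set V) ∩ interval G v z := by
      rw [← e1, ← e2, hms]
    constructor
    · have : v ∈ ({u, v, x} : Set V) ∩ interval G v z :=
        ⟨by simp, left_mem_interval_s3 v z⟩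
      rw [← key] at this
      exact this.1
    · have : x ∈ ({u, v, x} : Set V) ∩ interval G v z := ⟨by simp, hx_vz⟩
      rw [← key] at this
      exact this.1
  -- main step : some of u, v lies in L π
  have main : u ∈ L π ∨ v ∈ L π := by
    obtain ⟨w, hw⟩ := hL.nonempty π
    have htr1 : G.dist u w ≤ G.dist u v + G.dist v w := hG.dist_triangle
    have htr2 : G.dist v w ≤ G.dist v u + G.dist u w := hG.dist_triangle
    rw [hduv] at htr1
    rw [hdvu] at htr2
    -- trichotomy
    rcases (show G.dist v w = G.dist u w + 1 ∨ G.dist u w = G.dist v w + 1 ∨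
        G.dist u w = G.dist v w by omega) with hcase | hcase | hcase
    · -- w closer to u : u ∈ L π
      left
      have f1 : L ({u, z} + {u}) = interval G u z ∩ ({u} : Set V) := by
        rw [fire hL (show u ∈ L {u, z} by
            rw [hL.betweenness]; exact left_mem_interval_s3 u z)
          (show u ∈ L {u} by rw [L_single hL hG]; rfl),
          hL.betweenness, L_single hL hG]
      have f1' : L ({u, z} + {u}) = ({u} : Set V) := by
        rw [f1]
        exact Set.inter_eq_right.mpr (Set.singleton_subset_iff.mpr (left_mem_interval_s3 u z))
      have hu_vw : u ∈ interval G v w := by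
        rw [mem_interval_iff, hdvu, hcase]; omega
      have f2 : L (({u, z} + {u}) + {v, w}) = ({u} : Set V) ∩ interval G v w := by
        rw [fire hL (show u ∈ L ({u, z} + {u}) by rw [f1']; rfl)
          (show u ∈ L {v, w} by rw [hL.betweenness]; exact hu_vw),
          f1', hL.betweenness]
      have f3 : L (π + {u, w}) = L π ∩ interval G u w := by
        rw [fire hL hw (show w ∈ L {u, w} by
          rw [hL.betweenness]; exact right_mem_interval_s3 u w), hL.betweenness]
      have hms : ({u, z} : Multiset V) + {u} + {v, w} = π + {u, w} := by
        rw [hπ]; simp only [Multiset.insert_eq_cons, ← Multiset.singleton_add]; abel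
      have key : L π ∩ interval G u w = ({u} : Set V) ∩ interval G v w := by
        rw [← f3, ← f2, hms]
      have : u ∈ ({u} : Set V) ∩ interval G v w := ⟨rfl, hu_vw⟩
      rw [← key] at this
      exact this.1
    · -- w closer to v : v ∈ L π
      right
      have f1 : L ({v, z} + {v}) = interval G v z ∩ ({v} : Set V) := by
        rw [fire hL (show v ∈ L {v, z} by
            rw [hL.betweenness]; exact left_mem_interval_s3 v z)
          (show v ∈ L {v} by rw [L_single hL hG]; rfl),
          hL.betweenness, L_single hL hG]
      have f1' : L ({v, z} + {v}) = ({v} : Set V) := by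
        rw [f1]
        exact Set.inter_eq_right.mpr (Set.singleton_subset_iff.mpr (left_mem_interval_s3 v z))
      have hv_uw : v ∈ interval G u w := by
        rw [mem_interval_iff, hduv, hcase]; omega
      have f2 : L (({v, z} + {v}) + {u, w}) = ({v} : Set V) ∩ interval G u w := by
        rw [fire hL (show v ∈ L ({v, z} + {v}) by rw [f1']; rfl)
          (show v ∈ L {u, w} by rw [hL.betweenness]; exact hv_uw),
          f1', hL.betweenness]
      have f3 : L (π + {v, w}) = L π ∩ interval G v w := by
        rw [fire hL hw (show w ∈ L {v, w} by
          rw [hL.betweenness]; exact right_mem_interval_s3 v w), hL.betweenness]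
      have hms : ({v, z} : Multiset V) + {v} + {u, w} = π + {v, w} := by
        rw [hπ]; simp only [Multiset.insert_eq_cons, ← Multiset.singleton_add]; abel
      have key : L π ∩ interval G v w = ({v} : Set V) ∩ interval G u w := by
        rw [← f3, ← f2, hms]
      have : v ∈ ({v} : Set V) ∩ interval G u w := ⟨rfl, hv_uw⟩
      rw [← key] at this
      exact this.1
    · -- w equidistant from u, v
      have ha1 : 1 ≤ G.dist u w := by
        rcases Nat.eq_zero_or_pos (G.dist u w) with h0 | h0
        · exfalso
          have : u = w := hG.dist_eq_zero_iff.mp h0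
          subst this
          have : v = u := hG.dist_eq_zero_iff.mp (by omega)
          exact G.irrefl (this ▸ huv)
        · exact h0
      rcases (show G.dist u w = 1 ∨ 2 ≤ G.dist u w by omega) with ha | ha
      · -- w common neighbor of u and v : use axiom T
        left
        have huw : G.Adj u w := SimpleGraph.dist_eq_one_iff_adj.mp ha
        have hvw : G.Adj v w := SimpleGraph.dist_eq_one_iff_adj.mp (by omega)
        have e1 : L (π + {u, w}) = L π ∩ interval G u w := by
          rw [fire hL hw (show w ∈ L {u, w} by
            rw [hL.betweenness]; exact right_mem_interval_s3 u w), hL.betweenness]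
        have e2 : L ({u, v, w} + {u, z}) = ({u, v, w} : Set V) ∩ interval G u z := by
          rw [fire hL (show u ∈ L {u, v, w} by rw [hT u v w huv huw hvw]; simp)
            (show u ∈ L {u, z} by rw [hL.betweenness]; exact left_mem_interval_s3 u z),
            hT u v w huv huw hvw, hL.betweenness]
        have hms : π + ({u, w} : Multiset V) = {u, v, w} + {u, z} := by
          rw [hπ]; simp only [Multiset.insert_eq_cons, ← Multiset.singleton_add]; abel
        have key : L π ∩ interval G u w = ({u, v, w} : Set V) ∩ interval G u z := by
          rw [← e1, ← e2, hms]
        have : u ∈ ({u, v, w} : Set V) ∩ interval G u z :=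
          ⟨by simp, left_mem_interval_s3 u z⟩
        rw [← key] at this
        exact this.1
      · -- d(u,w) = d(v,w) ≥ 2 : contradiction via TC at w
        exfalso
        obtain ⟨t, hut, hvt, htd⟩ := hTC w u v huv
          (by rw [SimpleGraph.dist_comm, hcase, SimpleGraph.dist_comm])
          (by rw [SimpleGraph.dist_comm]; omega)
        -- htd : G.dist w t + 1 = G.dist w u
        have hwu : G.dist w u = G.dist u w := SimpleGraph.dist_comm
        have htw' : G.dist t w = G.dist w t := SimpleGraph.dist_comm
        have hwt_pos : 1 ≤ G.dist w t := by omega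
        have htw : t ≠ w := by
          intro h
          subst h
          rw [G.dist_self] at hwt_pos
          omega
        have ht_uw : t ∈ interval G u w := by
          rw [mem_interval_iff, SimpleGraph.dist_eq_one_iff_adj.mpr hut]
          omega
        have ht_vw : t ∈ interval G v w := by
          rw [mem_interval_iff, SimpleGraph.dist_eq_one_iff_adj.mpr hvt]
          omega
        -- L({w,t} + {w}) = {w}
        have g1 : L ({w, t} + {w}) = interval G w t ∩ ({w} : Set V) := by
          rw [fire hL (show w ∈ L {w, t} by
              rw [hL.betweenness]; exact left_mem_interval_s3 w t)
            (show w ∈ L {w} by rw [L_single hL hG]; rfl),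
            hL.betweenness, L_single hL hG]
        have g1' : L ({w, t} + {w}) = ({w} : Set V) := by
          rw [g1]
          exact Set.inter_eq_right.mpr (Set.singleton_subset_iff.mpr (left_mem_interval_s3 w t))
        -- L(π + ({w,t} + {w})) = L π ∩ {w}
        have g2 : L (π + ({w, t} + {w})) = L π ∩ ({w} : Set V) := by
          rw [fire hL hw (show w ∈ L ({w, t} + {w}) by rw [g1']; rfl), g1']
        -- other decomposition
        have g3 : L ({u, w} + {v, w}) = interval G u w ∩ interval G v w := by
          rw [fire hL (show w ∈ L {u, w} by
              rw [hL.betweenness]; exact right_mem_interval_s3 u w)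
            (show w ∈ L {v, w} by
              rw [hL.betweenness]; exact right_mem_interval_s3 v w),
            hL.betweenness, hL.betweenness]
        have g4 : L (({u, w} + {v, w}) + {z, t}) =
            (interval G u w ∩ interval G v w) ∩ interval G z t := by
          rw [fire hL (show t ∈ L ({u, w} + {v, w}) by rw [g3]; exact ⟨ht_uw, ht_vw⟩)
            (show t ∈ L {z, t} by rw [hL.betweenness]; exact right_mem_interval_s3 z t),
            g3, hL.betweenness]
        have hms : π + ({w, t} + {w} : Multiset V) = ({u, w} + {v, w}) + {z, t} := by
          rw [hπ]; simp only [Multiset.insert_eq_cons, ← Multiset.singleton_add]; abel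
        have key : L π ∩ ({w} : Set V) =
            (interval G u w ∩ interval G v w) ∩ interval G z t := by
          rw [← g2, ← g4, hms]
        have : t ∈ (interval G u w ∩ interval G v w) ∩ interval G z t :=
          ⟨⟨ht_uw, ht_vw⟩, right_mem_interval_s3 z t⟩
        rw [← key] at this
        exact htw this.2
  rcases main with hu | hv
  · obtain ⟨hu', hx'⟩ := chainA u hu (Or.inl rfl)
    obtain ⟨hv', _⟩ := chainB x hx' (Or.inr rfl)
    exact ⟨hu', hv'⟩
  · obtain ⟨hv', hx'⟩ := chainB v hv (Or.inl rfl)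
    obtain ⟨hu', _⟩ := chainA x hx' (Or.inr rfl)
    exact ⟨hu', hv'⟩

end ArxivABC
end

section
/- Let G be a finite connected bipartite simple graph, let (u,v) be a 2-pair of G (i.e., d(u,v)=2), let n ≥ 2, and let w_1, w_2, ..., w_n be distinct vertices of I°(u,v) = I(u,v) \ {u,v}. Then for any ABC-function L on G, both u and v belong to L(w_1,...,w_n) and to L(u,v,w_1,...,w_n). -/
namespace ArxivABC

variable {V : Type*}

/-- A (proper 2-)coloring witnessing that `G` is bipartite. -/
def Bipartite (G : SimpleGraph V) : Prop :=
  ∃ c : V → Bool, ∀ u v : V, G.Adj u v → c u ≠ c v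

/-- Chaining consistency: if `u` and `v` belong to `L ρ` for every `ρ` in a nonempty
multiset `P` of profiles, then they belong to `L P.sum`. -/
lemma chain {G : SimpleGraph V} {L : Multiset V → Set V} (hL : IsABC G L) (u v : V) :
    ∀ P : Multiset (Multiset V), P ≠ 0 → (∀ ρ ∈ P, u ∈ L ρ ∧ v ∈ L ρ) →
      u ∈ L P.sum ∧ v ∈ L P.sum := by
  intro P
  induction P using Multiset.induction with
  | empty => intro h; exact absurd rfl h
  | cons ρ P ih =>
    intro _ hmem
    rcases eq_or_ne P 0 with rfl | hP
    · simpa using hmem ρ (Multiset.mem_cons_self ρ 0)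
    · have h1 := hmem ρ (Multiset.mem_cons_self ρ P)
      have h2 := ih hP (fun σ hσ => hmem σ (Multiset.mem_cons_of_mem hσ))
      have hne : (L ρ ∩ L P.sum).Nonempty := ⟨u, h1.1, h2.1⟩
      rw [Multiset.sum_cons, hL.consistency ρ P.sum hne]
      exact ⟨⟨h1.1, h2.1⟩, ⟨h1.2, h2.2⟩⟩

/-- Lemma 9: in a bipartite graph, for a 2-pair `(u,v)` and `n ≥ 2` distinct vertices
`w₁, …, wₙ` of `I°(u,v)`, any ABC-function `L` satisfies `u, v ∈ L(w₁,…,wₙ)` and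
`u, v ∈ L(u,v,w₁,…,wₙ)`. -/
theorem stmt_6 [Fintype V] (G : SimpleGraph V) (hG : G.Connected)
    (hbip : Bipartite G)
    (u v : V) (huv : G.dist u v = 2)
    (n : ℕ) (hn : 2 ≤ n) (w : Fin n → V) (hinj : Function.Injective w)
    (hw : ∀ i : Fin n, w i ∈ interval G u v \ {u, v})
    (L : Multiset V → Set V) (hL : IsABC G L) :
    u ∈ L (List.ofFn w : Multiset V) ∧ v ∈ L (List.ofFn w : Multiset V) ∧
    u ∈ L (u ::ₘ v ::ₘ (List.ofFn w : Multiset V)) ∧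
    v ∈ L (u ::ₘ v ::ₘ (List.ofFn w : Multiset V)) := by
  haveI : NeZero n := ⟨by omega⟩
  obtain ⟨c, hc⟩ := hbip
  -- each w i is a common neighbor of u and v
  have hadj : ∀ i : Fin n, G.Adj u (w i) ∧ G.Adj (w i) v := by
    intro i
    obtain ⟨hI, hne⟩ := hw i
    have hneu : w i ≠ u := fun h => hne (by simp [h])
    have hnev : w i ≠ v := fun h => hne (by simp [h])
    have h1 : G.dist u (w i) ≠ 0 := fun h => hneu (hG.dist_eq_zero_iff.mp h).symm
    have h2 : G.dist (w i) v ≠ 0 := fun h => hnev (hG.dist_eq_zero_iff.mp h)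
    have hI' : G.dist u (w i) + G.dist (w i) v = 2 := by
      have := hI; simpa [interval, huv] using this
    have hd1 : G.dist u (w i) = 1 := by omega
    have hd2 : G.dist (w i) v = 1 := by omega
    exact ⟨SimpleGraph.dist_eq_one_iff_adj.mp hd1, SimpleGraph.dist_eq_one_iff_adj.mp hd2⟩
  -- key: u, v lie in I(w i, w j) for i ≠ j
  have key : ∀ i j : Fin n, i ≠ j →
      u ∈ interval G (w i) (w j) ∧ v ∈ interval G (w i) (w j) := by
    intro i j hij
    have hai := (hadj i).1
    have haj := (hadj j).1
    have hbi := (hadj i).2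
    have hbj := (hadj j).2
    have hnadj : ¬ G.Adj (w i) (w j) := by
      intro h
      have h1 := hc u (w i) hai
      have h2 := hc u (w j) haj
      have h3 := hc (w i) (w j) h
      have : c (w i) = c (w j) := by
        cases hci : c (w i) <;> cases hcj : c (w j) <;>
          simp_all
      exact h3 this
    have hle : G.dist (w i) (w j) ≤ 2 := by
      have := hG.dist_triangle (u := w i) (v := u) (w := w j)
      have hiu : G.dist (w i) u = 1 := by
        rw [SimpleGraph.dist_comm]; exact SimpleGraph.dist_eq_one_iff_adj.mpr hai
      have huj : G.dist u (w j) = 1 := SimpleGraph.dist_eq_one_iff_adj.mpr haj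
      omega
    have hne0 : G.dist (w i) (w j) ≠ 0 := fun h =>
      hij (hinj (hG.dist_eq_zero_iff.mp h))
    have hne1 : G.dist (w i) (w j) ≠ 1 := fun h =>
      hnadj (SimpleGraph.dist_eq_one_iff_adj.mp h)
    have hd : G.dist (w i) (w j) = 2 := by omega
    constructor
    · show G.dist (w i) u + G.dist u (w j) = G.dist (w i) (w j)
      rw [hd, SimpleGraph.dist_comm (u := w i),
        SimpleGraph.dist_eq_one_iff_adj.mpr hai, SimpleGraph.dist_eq_one_iff_adj.mpr haj]
    · show G.dist (w i) v + G.dist v (w j) = G.dist (w i) (w j)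
      rw [hd, SimpleGraph.dist_eq_one_iff_adj.mpr hbi, SimpleGraph.dist_comm (u := v),
        SimpleGraph.dist_eq_one_iff_adj.mpr hbj]
  set π : Multiset V := (List.ofFn w : Multiset V) with hπ
  -- π + π is the sum of the cyclic pairs {w i, w (i+1)}
  have hπuniv : π = Finset.univ.val.map w := by
    rw [hπ, List.ofFn_eq_map, Fin.univ_def]
    simp
  have hsingle : (∑ i : Fin n, ({w i} : Multiset V)) = π := by
    rw [hπuniv, Finset.sum_eq_multiset_sum, ← Multiset.sum_map_singleton
      (Finset.univ.val.map w), Multiset.map_map]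
    rfl
  have hshift : (∑ i : Fin n, ({w (i + 1)} : Multiset V))
      = ∑ i : Fin n, ({w i} : Multiset V) :=
    Fintype.sum_equiv (Equiv.addRight (1 : Fin n)) _ _ (fun i => rfl)
  have hdouble : π + π =
      (Finset.univ.val.map (fun i : Fin n => ({w i, w (i + 1)} : Multiset V))).sum := by
    have h1 : ∀ i : Fin n, ({w i, w (i + 1)} : Multiset V) = {w i} + {w (i + 1)} := by
      intro i; rfl
    rw [← Finset.sum_eq_multiset_sum]
    simp only [h1]
    rw [Finset.sum_add_distrib, hshift, hsingle]
  -- apply the chaining lemma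
  have hchain : u ∈ L (π + π) ∧ v ∈ L (π + π) := by
    rw [hdouble]
    apply chain hL
    · simp only [ne_eq, Multiset.map_eq_zero]
      intro h
      have : (0 : Fin n) ∈ Finset.univ.val := Finset.mem_univ_val _
      rw [h] at this
      simp at this
    · intro ρ hρ
      rw [Multiset.mem_map] at hρ
      obtain ⟨i, _, rfl⟩ := hρ
      have hii : i ≠ i + 1 := by
        intro h
        rw [left_eq_add, Fin.one_eq_zero_iff] at h
        omega
      rw [hL.betweenness]
      exact key i (i + 1) hii
  have hLππ : L (π + π) = L π := by
    obtain ⟨x, hx⟩ := hL.nonempty π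
    rw [hL.consistency π π ⟨x, hx, hx⟩, Set.inter_self]
  have hu : u ∈ L π := by rw [← hLππ]; exact hchain.1
  have hv : v ∈ L π := by rw [← hLππ]; exact hchain.2
  refine ⟨hu, hv, ?_, ?_⟩ <;>
  · have hcons : u ::ₘ v ::ₘ π = ({u, v} : Multiset V) + π := by
      simp [Multiset.insert_eq_cons]
    have huI : u ∈ interval G u v := by
      show G.dist u u + G.dist u v = G.dist u v; simp
    have hvI : v ∈ interval G u v := by
      show G.dist u v + G.dist v v = G.dist u v; simp
    have hne : (L {u, v} ∩ L π).Nonempty := by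
      rw [hL.betweenness]; exact ⟨u, huI, hu⟩
    rw [hcons, hL.consistency _ _ hne, hL.betweenness]
    first
      | exact ⟨huI, hu⟩
      | exact ⟨hvI, hv⟩

end ArxivABC
end

section
/- Let G be a finite connected modular graph and (u,v) a 2-pair of G. If there exists a profile π such that F_π is not pseudopeakless on (u,v) — that is, there is no vertex w ∈ I°(u,v) with F_π(w) ≤ max{F_π(u), F_π(v)} and such that equality F_π(w) = max{F_π(u),F_π(v)} holds only if F_π(u) = F_π(w) = F_π(v) — then I°(u,v) contains at least three distinct vertices. -/
namespace ArxivABC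

variable {V : Type*}

/-- A graph is modular if every triple of vertices admits a median vertex. -/
def Modular (G : SimpleGraph V) : Prop :=
  ∀ x y z : V, ∃ m : V,
    m ∈ interval G x y ∧ m ∈ interval G y z ∧ m ∈ interval G x z

/-- A vertex of the interior of the interval of a 2-pair is at distance 1 from both ends. -/
lemma interior_dist (G : SimpleGraph V) (hG : G.Connected) {u v a : V}
    (huv : G.dist u v = 2) (ha : a ∈ interval G u v \ ({u, v} : Set V)) :
    G.dist u a = 1 ∧ G.dist a v = 1 := by
  obtain ⟨ha1, ha2⟩ := ha
  simp only [interval, Set.mem_setOf_eq] at ha1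
  simp only [Set.mem_insert_iff, Set.mem_singleton_iff, not_or] at ha2
  have h1 : G.dist u a ≠ 0 := fun h => ha2.1 ((hG.dist_eq_zero_iff.mp h).symm)
  have h2 : G.dist a v ≠ 0 := fun h => ha2.2 (hG.dist_eq_zero_iff.mp h)
  omega

/-- Pointwise key inequality. -/
lemma key_ineq (G : SimpleGraph V) (hG : G.Connected) (hmod : Modular G)
    {u v a b : V} (huv : G.dist u v = 2)
    (ha : a ∈ interval G u v \ ({u, v} : Set V))
    (hb : b ∈ interval G u v \ ({u, v} : Set V))
    (hsub : ∀ c ∈ interval G u v \ ({u, v} : Set V), c = a ∨ c = b) (x : V) :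
    G.dist a x + G.dist b x ≤ G.dist u x + G.dist v x := by
  obtain ⟨hau, hav⟩ := interior_dist G hG huv ha
  obtain ⟨hbu, hbv⟩ := interior_dist G hG huv hb
  obtain ⟨m, hm1, hm2, hm3⟩ := hmod u v x
  simp only [interval, Set.mem_setOf_eq] at hm1 hm2 hm3
  have tau : G.dist a x ≤ G.dist a u + G.dist u x := hG.dist_triangle
  have tbu : G.dist b x ≤ G.dist b u + G.dist u x := hG.dist_triangle
  have tav : G.dist a x ≤ G.dist a v + G.dist v x := hG.dist_triangle
  have tbv : G.dist b x ≤ G.dist b v + G.dist v x := hG.dist_triangle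
  have hau' : G.dist a u = 1 := by rw [G.dist_comm]; exact hau
  have hbu' : G.dist b u = 1 := by rw [G.dist_comm]; exact hbu
  by_cases hmu : m = u
  · rw [hmu] at hm2
    have hvu : G.dist v u = 2 := by rw [G.dist_comm]; exact huv
    omega
  · by_cases hmv : m = v
    · rw [hmv] at hm3
      omega
    · have hmI : m ∈ interval G u v \ ({u, v} : Set V) := by
        refine ⟨hm1, ?_⟩
        simp [hmu, hmv]
      rcases hsub m hmI with hma | hmb
      · rw [hma] at hm2 hm3
        have hva : G.dist v a = 1 := by rw [G.dist_comm]; exact hav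
        omega
      · rw [hmb] at hm2 hm3
        have hvb : G.dist v b = 1 := by rw [G.dist_comm]; exact hbv
        omega

/-- Lemma 10: in a modular graph, if `(u,v)` is a 2-pair and there is a profile `π`
such that `F_π` is not pseudopeakless on `(u,v)`, then `I°(u,v)` contains at least
three distinct vertices. -/
theorem stmt_7 [Fintype V] (G : SimpleGraph V) (hG : G.Connected)
    (hmod : Modular G)
    (u v : V) (huv : G.dist u v = 2) (π : Multiset V)
    (hnp : ¬ ∃ w ∈ interval G u v \ {u, v},
      cost G π w ≤ max (cost G π u) (cost G π v) ∧
      (cost G π w = max (cost G π u) (cost G π v) →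
        cost G π u = cost G π w ∧ cost G π w = cost G π v)) :
    ∃ w₁ w₂ w₃ : V, w₁ ∈ interval G u v \ {u, v} ∧ w₂ ∈ interval G u v \ {u, v} ∧
      w₃ ∈ interval G u v \ {u, v} ∧ w₁ ≠ w₂ ∧ w₁ ≠ w₃ ∧ w₂ ≠ w₃ := by
  by_contra hcon
  push_neg at hcon
  -- First, I°(u,v) is nonempty: take the middle vertex of a shortest walk.
  obtain ⟨p, hp⟩ := (hG u v).exists_walk_length_eq_dist
  rw [huv] at hp
  obtain ⟨a, ha⟩ : ∃ a, a ∈ interval G u v \ ({u, v} : Set V) := by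
    cases p with
    | nil => simp at hp
    | cons h q =>
      rename_i w
      cases q with
      | nil => simp at hp
      | cons h' q' =>
        rename_i w'
        cases q' with
        | nil =>
          have e1 : G.dist u w = 1 := SimpleGraph.dist_eq_one_iff_adj.mpr h
          have e2 : G.dist w v = 1 := SimpleGraph.dist_eq_one_iff_adj.mpr h'
          refine ⟨w, ⟨?_, ?_⟩⟩
          · show G.dist u w + G.dist w v = G.dist u v
            omega
          · simp only [Set.mem_insert_iff, Set.mem_singleton_iff, not_or]
            exact ⟨h.ne', h'.ne⟩
        | cons h'' q'' => simp at hp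
  -- Choose b such that I° ⊆ {a, b}
  obtain ⟨b, hb, hsub⟩ : ∃ b, b ∈ interval G u v \ ({u, v} : Set V) ∧
      ∀ c ∈ interval G u v \ ({u, v} : Set V), c = a ∨ c = b := by
    by_cases hex : ∃ b ∈ interval G u v \ ({u, v} : Set V), b ≠ a
    · obtain ⟨b, hb, hba⟩ := hex
      refine ⟨b, hb, fun c hc => ?_⟩
      by_contra hcc
      push_neg at hcc
      exact hcc.2 (hcon a b c ha hb hc (Ne.symm hba) (Ne.symm hcc.1)).symm
    · push_neg at hex
      exact ⟨a, ha, fun c hc => Or.inl (hex c hc)⟩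
  -- Sum the pointwise inequality
  have hsum : cost G π a + cost G π b ≤ cost G π u + cost G π v := by
    unfold cost
    rw [← Multiset.sum_map_add, ← Multiset.sum_map_add]
    exact Multiset.sum_map_le_sum_map _ _ fun x _ =>
      key_ineq G hG hmod huv ha hb hsub x
  -- Pick the cheaper of a, b and contradict hnp
  apply hnp
  rcases le_total (cost G π a) (cost G π b) with hab | hab
  · refine ⟨a, ha, ?_, ?_⟩
    · omega
    · intro heq
      constructor <;> omega
  · refine ⟨b, hb, ?_, ?_⟩
    · omega
    · intro heq
      constructor <;> omega

end ArxivABC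
end

section
/- Let G be a finite connected bipartite simple graph, (u,v) a 2-pair of G with three distinct vertices w_1, w_2, w_3 ∈ I°(u,v), and z a vertex of G with d(u,z) = d(v,z). Then for any ABC-function L on G, both u and v belong to L(u,v,w_1,w_2,w_3,z). -/
namespace ArxivABC

variable {V : Type*}

/-! ### Auxiliary lemmas for `stmt_8` -/

section AuxStmt8

variable {G : SimpleGraph V} {L : Multiset V → Set V}

lemma abc_walk_parity (c : V → Bool) (hc : ∀ a b : V, G.Adj a b → c a ≠ c b) :
    ∀ {x y : V} (p : G.Walk x y), (c x = c y ↔ Even p.length) := by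
  intro x y p
  induction p with
  | nil => simp
  | @cons a b y' h q ih =>
    have hab := hc a b h
    simp only [SimpleGraph.Walk.length_cons, Nat.even_add_one, ← ih]
    cases hca : c a <;> cases hcb : c b <;> cases hcy : c y' <;> simp_all

lemma abc_dist_parity (hG : G.Connected) {c : V → Bool}
    (hc : ∀ a b : V, G.Adj a b → c a ≠ c b) (x y : V) :
    (c x = c y ↔ Even (G.dist x y)) := by
  obtain ⟨p, hp⟩ := hG.exists_walk_length_eq_dist x y
  rw [← hp]
  exact abc_walk_parity c hc p

/-- In a connected bipartite graph, for adjacent `a, b` and any `s`, the distances from `s`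
to `a` and to `b` differ by exactly one. -/
lemma abc_adj_dichotomy (hG : G.Connected) (hbip : Bipartite G) {a b : V}
    (hab : G.Adj a b) (s : V) :
    G.dist s a + 1 = G.dist s b ∨ G.dist s b + 1 = G.dist s a := by
  obtain ⟨c, hc⟩ := hbip
  have hab1 : G.dist a b = 1 := SimpleGraph.dist_eq_one_iff_adj.mpr hab
  have hba1 : G.dist b a = 1 := SimpleGraph.dist_eq_one_iff_adj.mpr hab.symm
  have h1 : G.dist s b ≤ G.dist s a + 1 := by
    have := hG.dist_triangle (u := s) (v := a) (w := b); omega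
  have h2 : G.dist s a ≤ G.dist s b + 1 := by
    have := hG.dist_triangle (u := s) (v := b) (w := a); omega
  have hpa := abc_dist_parity hG hc s a
  have hpb := abc_dist_parity hG hc s b
  have hne : G.dist s a ≠ G.dist s b := by
    intro h
    have hEv : (c s = c a) ↔ (c s = c b) := by
      rw [hpa, hpb, h]
    have : c a = c b := by
      cases hca : c a <;> cases hcb : c b <;> cases hcs : c s <;> simp_all
    exact hc a b hab this
  omega

lemma abc_mem_interval {a b t : V} (h : G.dist a t + G.dist t b = G.dist a b) :
    t ∈ interval G a b := h

lemma abc_chain2 (hL : IsABC G L) {a1 b1 a2 b2 t : V}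
    (h1 : t ∈ interval G a1 b1) (h2 : t ∈ interval G a2 b2) :
    L ({a1, b1} + {a2, b2}) = interval G a1 b1 ∩ interval G a2 b2 := by
  have hne : (L {a1, b1} ∩ L {a2, b2}).Nonempty := by
    rw [hL.betweenness, hL.betweenness]; exact ⟨t, h1, h2⟩
  rw [hL.consistency _ _ hne, hL.betweenness, hL.betweenness]

lemma abc_chain3 (hL : IsABC G L) {a1 b1 a2 b2 a3 b3 t : V}
    (h1 : t ∈ interval G a1 b1) (h2 : t ∈ interval G a2 b2) (h3 : t ∈ interval G a3 b3) :
    L ({a1, b1} + {a2, b2} + {a3, b3}) =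
      interval G a1 b1 ∩ interval G a2 b2 ∩ interval G a3 b3 := by
  have h12 := abc_chain2 hL h1 h2
  have hne : (L ({a1, b1} + {a2, b2}) ∩ L {a3, b3}).Nonempty := by
    rw [h12, hL.betweenness]; exact ⟨t, ⟨h1, h2⟩, h3⟩
  rw [hL.consistency _ _ hne, h12, hL.betweenness]

lemma abc_chain4 (hL : IsABC G L) {a1 b1 a2 b2 a3 b3 a4 b4 t : V}
    (h1 : t ∈ interval G a1 b1) (h2 : t ∈ interval G a2 b2) (h3 : t ∈ interval G a3 b3)
    (h4 : t ∈ interval G a4 b4) :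
    L ({a1, b1} + {a2, b2} + {a3, b3} + {a4, b4}) =
      interval G a1 b1 ∩ interval G a2 b2 ∩ interval G a3 b3 ∩ interval G a4 b4 := by
  have h123 := abc_chain3 hL h1 h2 h3
  have hne : (L ({a1, b1} + {a2, b2} + {a3, b3}) ∩ L {a4, b4}).Nonempty := by
    rw [h123, hL.betweenness]; exact ⟨t, ⟨⟨h1, h2⟩, h3⟩, h4⟩
  rw [hL.consistency _ _ hne, h123, hL.betweenness]

/-- If the profile `π` can be written as a sum of three pairs whose intervals all contain `t`,
then `t ∈ L π`. -/
lemma abc_mem_of_three (hL : IsABC G L) {π : Multiset V} {t a1 b1 a2 b2 a3 b3 : V}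
    (hπ : π = {a1, b1} + {a2, b2} + {a3, b3})
    (h1 : t ∈ interval G a1 b1) (h2 : t ∈ interval G a2 b2) (h3 : t ∈ interval G a3 b3) :
    t ∈ L π := by
  rw [hπ, abc_chain3 hL h1 h2 h3]
  exact ⟨⟨h1, h2⟩, h3⟩

/-- The key gadget: if `s ∈ L π`, and `π + {s, x}` can be written as a sum of four pairs
whose intervals all contain `t`, then `t ∈ L π`. -/
lemma abc_gadget (hL : IsABC G L) {π : Multiset V} {s x t a1 b1 a2 b2 a3 b3 a4 b4 : V}
    (hs : s ∈ L π)
    (hπ : π + {s, x} = {a1, b1} + {a2, b2} + {a3, b3} + {a4, b4})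
    (h1 : t ∈ interval G a1 b1) (h2 : t ∈ interval G a2 b2) (h3 : t ∈ interval G a3 b3)
    (h4 : t ∈ interval G a4 b4) :
    t ∈ L π := by
  have ht : t ∈ L (π + {s, x}) := by
    rw [hπ, abc_chain4 hL h1 h2 h3 h4]
    exact ⟨⟨⟨h1, h2⟩, h3⟩, h4⟩
  have hsx : s ∈ L ({s, x} : Multiset V) := by
    rw [hL.betweenness]
    exact abc_mem_interval (by rw [SimpleGraph.dist_self]; omega)
  have hcons := hL.consistency π {s, x} ⟨s, hs, hsx⟩
  rw [hcons] at ht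
  exact ht.1

end AuxStmt8

/-- Lemma 12: in a bipartite graph, for a 2-pair `(u,v)` with three distinct vertices
`w₁, w₂, w₃ ∈ I°(u,v)` and a vertex `z` equidistant from `u` and `v`, any ABC-function
`L` satisfies `u, v ∈ L(u,v,w₁,w₂,w₃,z)`. -/
theorem stmt_8 [Fintype V] (G : SimpleGraph V) (hG : G.Connected)
    (hbip : Bipartite G)
    (u v : V) (huv : G.dist u v = 2)
    (w₁ w₂ w₃ : V)
    (hw₁ : w₁ ∈ interval G u v \ {u, v}) (hw₂ : w₂ ∈ interval G u v \ {u, v})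
    (hw₃ : w₃ ∈ interval G u v \ {u, v})
    (hd₁₂ : w₁ ≠ w₂) (hd₁₃ : w₁ ≠ w₃) (hd₂₃ : w₂ ≠ w₃)
    (z : V) (hz : G.dist u z = G.dist v z)
    (L : Multiset V → Set V) (hL : IsABC G L) :
    u ∈ L {u, v, w₁, w₂, w₃, z} ∧ v ∈ L {u, v, w₁, w₂, w₃, z} := by
  classical
  -- Basic distance facts about the wᵢ
  have key : ∀ w : V, w ∈ interval G u v \ {u, v} → G.dist u w = 1 ∧ G.dist w v = 1 := by
    intro w hw
    have e : G.dist u w + G.dist w v = G.dist u v := hw.1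
    have hne : ¬(w = u ∨ w = v) := hw.2
    push_neg at hne
    have h0 : G.dist u w ≠ 0 := fun h => hne.1 ((hG.dist_eq_zero_iff.mp h).symm)
    have h0' : G.dist w v ≠ 0 := fun h => hne.2 (hG.dist_eq_zero_iff.mp h)
    omega
  obtain ⟨du1, d1v⟩ := key w₁ hw₁
  obtain ⟨du2, d2v⟩ := key w₂ hw₂
  obtain ⟨du3, d3v⟩ := key w₃ hw₃
  -- pairwise distances between the wᵢ are 2 (bipartite, hence triangle-free)
  have hww : ∀ a b : V, a ≠ b → G.dist u a = 1 → G.dist u b = 1 → G.dist a b = 2 := by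
    intro a b hab ha hb
    obtain ⟨c, hc⟩ := hbip
    have haa : G.Adj u a := SimpleGraph.dist_eq_one_iff_adj.mp ha
    have hba : G.Adj u b := SimpleGraph.dist_eq_one_iff_adj.mp hb
    have hnadj : ¬ G.Adj a b := by
      intro h
      have h1 := hc u a haa
      have h2 := hc u b hba
      have h3 := hc a b h
      cases hcu : c u <;> cases hca : c a <;> cases hcb : c b <;> simp_all
    have hle : G.dist a b ≤ 2 := by
      have := hG.dist_triangle (u := a) (v := u) (w := b)
      have hau : G.dist a u = 1 := by rwa [SimpleGraph.dist_comm] at ha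
      omega
    have h0 : G.dist a b ≠ 0 := fun h => hab (hG.dist_eq_zero_iff.mp h)
    have h1 : G.dist a b ≠ 1 := fun h => hnadj (SimpleGraph.dist_eq_one_iff_adj.mp h)
    omega
  have d12 : G.dist w₁ w₂ = 2 := hww w₁ w₂ hd₁₂ du1 du2
  have d13 : G.dist w₁ w₃ = 2 := hww w₁ w₃ hd₁₃ du1 du3
  have d23 : G.dist w₂ w₃ = 2 := hww w₂ w₃ hd₂₃ du2 du3
  set k := G.dist u z with hk
  have dvz : G.dist v z = k := hz.symm
  have dzu : G.dist z u = k := by rw [SimpleGraph.dist_comm]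
  -- adjacency facts
  have adj_u1 : G.Adj u w₁ := SimpleGraph.dist_eq_one_iff_adj.mp du1
  have adj_u2 : G.Adj u w₂ := SimpleGraph.dist_eq_one_iff_adj.mp du2
  have adj_u3 : G.Adj u w₃ := SimpleGraph.dist_eq_one_iff_adj.mp du3
  have adj_v3 : G.Adj v w₃ := by
    rw [← SimpleGraph.dist_eq_one_iff_adj, SimpleGraph.dist_comm]; exact d3v
  -- distances from z to the wᵢ : each is k+1 or k-1
  have dth1 := abc_adj_dichotomy hG hbip adj_u1 z
  have dth2 := abc_adj_dichotomy hG hbip adj_u2 z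
  have dth3 := abc_adj_dichotomy hG hbip adj_u3 z
  rw [dzu] at dth1 dth2 dth3
  -- good case helper
  have good : ∀ a1 a2 a3 : V, a1 ≠ a2 →
      G.dist u a1 = 1 → G.dist a1 v = 1 → G.dist u a2 = 1 → G.dist a2 v = 1 →
      G.dist u a3 = 1 → G.dist a3 v = 1 → G.dist z a3 = k + 1 →
      ({u, v, w₁, w₂, w₃, z} : Multiset V) = {u, v} + {a1, a2} + {a3, z} →
      u ∈ L {u, v, w₁, w₂, w₃, z} ∧ v ∈ L {u, v, w₁, w₂, w₃, z} := by
    intro a1 a2 a3 hne12 h1 h1' h2 h2' h3 h3' hgood hmeq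
    have d3z : G.dist a3 z = k + 1 := by rwa [SimpleGraph.dist_comm] at hgood
    have da12 : G.dist a1 a2 = 2 := hww a1 a2 hne12 h1 h2
    have mu1 : u ∈ interval G u v :=
      abc_mem_interval (by rw [SimpleGraph.dist_self]; omega)
    have mu2 : u ∈ interval G a1 a2 := by
      refine abc_mem_interval ?_
      have : G.dist a1 u = 1 := by rwa [SimpleGraph.dist_comm] at h1
      omega
    have mu3 : u ∈ interval G a3 z := by
      refine abc_mem_interval ?_
      have : G.dist a3 u = 1 := by rwa [SimpleGraph.dist_comm] at h3
      omega
    have mv1 : v ∈ interval G u v :=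
      abc_mem_interval (by rw [SimpleGraph.dist_self]; omega)
    have mv2 : v ∈ interval G a1 a2 := by
      refine abc_mem_interval ?_
      have hb : G.dist v a2 = 1 := by rwa [SimpleGraph.dist_comm] at h2'
      have ha : G.dist a1 v = 1 := h1'
      omega
    have mv3 : v ∈ interval G a3 z := by
      refine abc_mem_interval ?_
      have : G.dist a3 v = 1 := h3'
      omega
    exact ⟨abc_mem_of_three hL hmeq mu1 mu2 mu3, abc_mem_of_three hL hmeq mv1 mv2 mv3⟩
  -- case split: either some wᵢ is at distance k+1 from z (good), or all at k-1 (bad)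
  rcases dth3 with g3 | b3
  · exact good w₁ w₂ w₃ hd₁₂ du1 d1v du2 d2v du3 d3v g3.symm (by
      rw [Multiset.ext]; intro a
      simp only [Multiset.insert_eq_cons, Multiset.count_add, Multiset.count_cons,
        Multiset.count_singleton]
      try ring)
  rcases dth2 with g2 | b2
  · exact good w₁ w₃ w₂ hd₁₃ du1 d1v du3 d3v du2 d2v g2.symm (by
      rw [Multiset.ext]; intro a
      simp only [Multiset.insert_eq_cons, Multiset.count_add, Multiset.count_cons,
        Multiset.count_singleton]
      try ring)
  rcases dth1 with g1 | b1
  · exact good w₂ w₃ w₁ hd₂₃ du2 d2v du3 d3v du1 d1v g1.symm (by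
      rw [Multiset.ext]; intro a
      simp only [Multiset.insert_eq_cons, Multiset.count_add, Multiset.count_cons,
        Multiset.count_singleton]
      try ring)
  -- BAD CASE : G.dist z wᵢ + 1 = k for all i
  have d1z : G.dist w₁ z + 1 = k := by rw [SimpleGraph.dist_comm]; exact b1
  have d2z : G.dist w₂ z + 1 = k := by rw [SimpleGraph.dist_comm]; exact b2
  have d3z : G.dist w₃ z + 1 = k := by rw [SimpleGraph.dist_comm]; exact b3
  set π : Multiset V := {u, v, w₁, w₂, w₃, z} with hπdef
  obtain ⟨s, hs⟩ := hL.nonempty π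
  -- auxiliary canonical distances
  have d3u : G.dist w₃ u = 1 := by rwa [SimpleGraph.dist_comm] at du3
  have dv3 : G.dist v w₃ = 1 := by rwa [SimpleGraph.dist_comm] at d3v
  have dv1 : G.dist v w₁ = 1 := by rwa [SimpleGraph.dist_comm] at d1v
  have dv2 : G.dist v w₂ = 1 := by rwa [SimpleGraph.dist_comm] at d2v
  have d1u : G.dist w₁ u = 1 := by rwa [SimpleGraph.dist_comm] at du1
  have d2u : G.dist w₂ u = 1 := by rwa [SimpleGraph.dist_comm] at du2
  have dvu : G.dist v u = 2 := by rwa [SimpleGraph.dist_comm] at huv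
  -- frequently used interval memberships
  have m3_vz : w₃ ∈ interval G v z := abc_mem_interval (by omega)
  have m3_uz : w₃ ∈ interval G u z := abc_mem_interval (by omega)
  have m3_13 : w₃ ∈ interval G w₁ w₃ :=
    abc_mem_interval (by rw [SimpleGraph.dist_self]; omega)
  have m3_23 : w₃ ∈ interval G w₂ w₃ :=
    abc_mem_interval (by rw [SimpleGraph.dist_self]; omega)
  have mu_uv : u ∈ interval G u v :=
    abc_mem_interval (by rw [SimpleGraph.dist_self]; omega)
  have mv_uv : v ∈ interval G u v :=
    abc_mem_interval (by rw [SimpleGraph.dist_self]; omega)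
  have mu_uz : u ∈ interval G u z :=
    abc_mem_interval (by rw [SimpleGraph.dist_self]; omega)
  have mv_vz : v ∈ interval G v z :=
    abc_mem_interval (by rw [SimpleGraph.dist_self]; omega)
  have mu_13 : u ∈ interval G w₁ w₃ := abc_mem_interval (by omega)
  have mu_23 : u ∈ interval G w₂ w₃ := abc_mem_interval (by omega)
  have mv_13 : v ∈ interval G w₁ w₃ := abc_mem_interval (by omega)
  have mv_23 : v ∈ interval G w₂ w₃ := abc_mem_interval (by omega)
  have mv_12 : v ∈ interval G w₁ w₂ := abc_mem_interval (by omega)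
  -- multiset identities
  have M1 : ∀ t : V, π + ({t, w₃} : Multiset V) = {t, u} + {v, z} + {w₁, w₃} + {w₂, w₃} := by
    intro t
    rw [Multiset.ext]; intro a
    simp only [hπdef, Multiset.insert_eq_cons, Multiset.count_add, Multiset.count_cons,
      Multiset.count_singleton]
    ring
  have M2 : π + ({s, w₃} : Multiset V) = {s, v} + {u, z} + {w₁, w₃} + {w₂, w₃} := by
    rw [Multiset.ext]; intro a
    simp only [hπdef, Multiset.insert_eq_cons, Multiset.count_add, Multiset.count_cons,
      Multiset.count_singleton]
    ring
  have M3 : π + ({s, v} : Multiset V) = {u, v} + {v, z} + {w₁, w₂} + {s, w₃} := by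
    rw [Multiset.ext]; intro a
    simp only [hπdef, Multiset.insert_eq_cons, Multiset.count_add, Multiset.count_cons,
      Multiset.count_singleton]
    ring
  have M4 : π + ({w₃, u} : Multiset V) = {u, v} + {u, z} + {w₁, w₃} + {w₂, w₃} := by
    rw [Multiset.ext]; intro a
    simp only [hπdef, Multiset.insert_eq_cons, Multiset.count_add, Multiset.count_cons,
      Multiset.count_singleton]
    ring
  have M5 : π + ({w₃, v} : Multiset V) = {u, v} + {v, z} + {w₁, w₃} + {w₂, w₃} := by
    rw [Multiset.ext]; intro a
    simp only [hπdef, Multiset.insert_eq_cons, Multiset.count_add, Multiset.count_cons,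
      Multiset.count_singleton]
    ring
  -- first main step : w₃ ∈ L π
  have hw3P : w₃ ∈ L π := by
    rcases abc_adj_dichotomy hG hbip adj_u3 s with hA | hB
    · -- u ∈ I(s,w₃) and we look at v
      rcases abc_adj_dichotomy hG hbip adj_v3 s with hA' | hB'
      · -- v ∈ I(s,w₃) : gadget 5 gives v ∈ L π, then gadget with s := v
        have mv_sw3 : v ∈ interval G s w₃ := abc_mem_interval (by omega)
        have hvP : v ∈ L π :=
          abc_gadget hL hs M3 mv_uv mv_vz mv_12 mv_sw3
        -- now w₃ ∈ I(v,u)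
        have m3_vu : w₃ ∈ interval G v u := abc_mem_interval (by omega)
        exact abc_gadget hL hvP (M1 v) m3_vu m3_vz m3_13 m3_23
      · -- w₃ ∈ I(s,v) : gadget 4
        have m3_sv : w₃ ∈ interval G s v := abc_mem_interval (by omega)
        exact abc_gadget hL hs M2 m3_sv m3_uz m3_13 m3_23
    · -- w₃ ∈ I(s,u) : gadget 3
      have m3_su : w₃ ∈ interval G s u := abc_mem_interval (by omega)
      exact abc_gadget hL hs (M1 s) m3_su m3_vz m3_13 m3_23
  -- bootstrap : u ∈ L π and v ∈ L π
  have huP : u ∈ L π := abc_gadget hL hw3P M4 mu_uv mu_uz mu_13 mu_23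
  have hvP : v ∈ L π := abc_gadget hL hw3P M5 mv_uv mv_vz mv_13 mv_23
  exact ⟨huP, hvP⟩

end ArxivABC
end

section
/- Let G be a finite connected simple graph and L an ABC-function on G. (1) For any even profile π that admits a perfect pairing (a pairing P and vertex v with D_π(P) = F_π(v)), we have L(π) = Med(π). (2) For any profile π such that π^{2k} (the concatenation of 2k copies of π) admits a perfect pairing for some integer k ≥ 1, we have L(π) = Med(π). -/
namespace ArxivABC

variable {V : Type*}

/-- `P` is a pairing of the (even) profile `π`: a partition of the multiset `π`
into pairs. -/
def IsPairing (π : Multiset V) (P : Multiset (V × V)) : Prop :=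
  P.map Prod.fst + P.map Prod.snd = π

/-- `D_π(P) = Σ_{{a,b} ∈ P} d(a,b)`. -/
noncomputable def pairingCost (G : SimpleGraph V) (P : Multiset (V × V)) : ℕ :=
  (P.map fun p => G.dist p.1 p.2).sum

/-- The profile `π` admits a perfect pairing: a pairing `P` and a vertex `v` with
`D_π(P) = F_π(v)`. -/
def HasPerfectPairing (G : SimpleGraph V) (π : Multiset V) : Prop :=
  ∃ (P : Multiset (V × V)) (v : V), IsPairing π P ∧ pairingCost G P = cost G π v

/-- The pairing property: every even profile admits a perfect pairing. -/
def PairingProperty (G : SimpleGraph V) : Prop :=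
  ∀ π : Multiset V, Even (Multiset.card π) → HasPerfectPairing G π

/-- The double-pairing property: for every profile `π` the double profile `ππ`
admits a perfect pairing. -/
def DoublePairingProperty (G : SimpleGraph V) : Prop :=
  ∀ π : Multiset V, HasPerfectPairing G (π + π)

/-! ### Auxiliary lemmas -/

lemma aux_sum_le {α : Type*} (s : Multiset α) (f g : α → ℕ)
    (h : ∀ a ∈ s, f a ≤ g a) : (s.map f).sum ≤ (s.map g).sum := by
  induction s using Multiset.induction with
  | empty => simp
  | cons b t ih =>
    simp only [Multiset.map_cons, Multiset.sum_cons]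
    exact Nat.add_le_add (h b (Multiset.mem_cons_self b t))
      (ih fun a ha => h a (Multiset.mem_cons_of_mem ha))

/-- Pointwise ≤ plus reverse inequality of sums gives pointwise equality. -/
lemma aux_eq_of_sum {α : Type*} (s : Multiset α) (f g : α → ℕ)
    (hle : ∀ a ∈ s, f a ≤ g a) (h : (s.map g).sum ≤ (s.map f).sum) :
    ∀ a ∈ s, f a = g a := by
  induction s using Multiset.induction with
  | empty => intro a ha; simp at ha
  | cons b t ih =>
    have htle : (t.map f).sum ≤ (t.map g).sum := by
      exact aux_sum_le t f g fun a ha => hle a (Multiset.mem_cons_of_mem ha)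
    have hb : f b ≤ g b := hle b (Multiset.mem_cons_self b t)
    simp only [Multiset.map_cons, Multiset.sum_cons] at h
    intro a ha
    rcases Multiset.mem_cons.mp ha with rfl | ha'
    · omega
    · exact ih (fun a ha => hle a (Multiset.mem_cons_of_mem ha)) (by omega) a ha'

lemma L_zero {G : SimpleGraph V} {L : Multiset V → Set V} (hG : G.Connected)
    (hL : IsABC G L) : L 0 = Set.univ := by
  obtain ⟨x, hx⟩ := hL.nonempty 0
  ext w
  simp only [Set.mem_univ, iff_true]
  have hxw : L {x, w} = interval G x w := hL.betweenness x w
  have hxmem : x ∈ interval G x w := by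
    simp [interval, SimpleGraph.dist_self]
  have := hL.consistency 0 {x, w} ⟨x, hx, hxw ▸ hxmem⟩
  rw [zero_add] at this
  have hwmem : w ∈ L {x, w} := by
    rw [hxw]; simp [interval, SimpleGraph.dist_self]
  rw [this] at hwmem
  exact hwmem.1

/-- Iterated consistency over a multiset of pairs sharing a common interval point. -/
lemma L_pairs {G : SimpleGraph V} {L : Multiset V → Set V} (hG : G.Connected)
    (hL : IsABC G L) (P : Multiset (V × V)) (x : V)
    (hx : ∀ p ∈ P, x ∈ interval G p.1 p.2) :
    L (P.map Prod.fst + P.map Prod.snd) = {u | ∀ p ∈ P, u ∈ interval G p.1 p.2} := by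
  induction P using Multiset.induction with
  | empty => simp [L_zero hG hL]
  | cons a s ih =>
    have hx' : ∀ p ∈ s, x ∈ interval G p.1 p.2 :=
      fun p hp => hx p (Multiset.mem_cons_of_mem hp)
    have hms : (a ::ₘ s).map Prod.fst + (a ::ₘ s).map Prod.snd
        = ({a.1, a.2} : Multiset V) + (s.map Prod.fst + s.map Prod.snd) := by
      simp only [Multiset.map_cons, Multiset.insert_eq_cons, Multiset.cons_add,
        Multiset.add_cons, Multiset.singleton_add, Multiset.cons_swap]
    have hint : (L {a.1, a.2} ∩ L (s.map Prod.fst + s.map Prod.snd)).Nonempty := by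
      refine ⟨x, ?_, ?_⟩
      · rw [hL.betweenness]; exact hx a (Multiset.mem_cons_self a s)
      · rw [ih hx']; exact hx'
    rw [hms, hL.consistency _ _ hint, hL.betweenness, ih hx']
    ext u
    simp only [Set.mem_inter_iff, Set.mem_setOf_eq, Multiset.mem_cons]
    constructor
    · rintro ⟨h1, h2⟩ p (rfl | hp)
      · exact h1
      · exact h2 p hp
    · intro h
      exact ⟨h a (Or.inl rfl), fun p hp => h p (Or.inr hp)⟩

lemma cost_pairs {G : SimpleGraph V} (P : Multiset (V × V)) (u : V) :
    cost G (P.map Prod.fst + P.map Prod.snd) u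
      = (P.map fun p => G.dist u p.1 + G.dist u p.2).sum := by
  simp only [cost, Multiset.map_add, Multiset.sum_add, Multiset.map_map, Function.comp]
  rw [Multiset.sum_map_add]

/-- Part (1). -/
lemma part1 {G : SimpleGraph V} {L : Multiset V → Set V} (hG : G.Connected)
    (hL : IsABC G L) (π : Multiset V) (hπ : HasPerfectPairing G π) :
    L π = median G π := by
  obtain ⟨P, v, hP, hcost⟩ := hπ
  subst hP
  -- triangle inequality per pair
  have htri : ∀ (u : V) (p : V × V), p ∈ P → G.dist p.1 p.2 ≤ G.dist u p.1 + G.dist u p.2 := by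
    intro u p _
    calc G.dist p.1 p.2 ≤ G.dist p.1 u + G.dist u p.2 := hG.dist_triangle
    _ = G.dist u p.1 + G.dist u p.2 := by rw [SimpleGraph.dist_comm (u := p.1) (v := u)]
  -- lower bound for costs
  have hlow : ∀ u : V, pairingCost G P ≤ cost G (P.map Prod.fst + P.map Prod.snd) u := by
    intro u
    rw [cost_pairs]
    exact aux_sum_le P _ _ (htri u)
  -- membership in all intervals iff cost equals pairingCost
  have hiff : ∀ u : V, (∀ p ∈ P, u ∈ interval G p.1 p.2) ↔
      cost G (P.map Prod.fst + P.map Prod.snd) u = pairingCost G P := by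
    intro u
    constructor
    · intro h
      rw [cost_pairs, pairingCost]
      congr 1
      apply Multiset.map_congr rfl
      intro p hp
      have := h p hp
      simp only [interval, Set.mem_setOf_eq] at this
      rw [SimpleGraph.dist_comm (u := u) (v := p.1)]
      exact this
    · intro h
      intro p hp
      have key := aux_eq_of_sum P (fun p => G.dist p.1 p.2)
        (fun p => G.dist u p.1 + G.dist u p.2) (htri u) (by
          rw [← cost_pairs, h]; rfl) p hp
      simp only [interval, Set.mem_setOf_eq]
      rw [SimpleGraph.dist_comm (u := p.1) (v := u)]
      exact key.symm
  have hv : ∀ p ∈ P, v ∈ interval G p.1 p.2 := (hiff v).mpr hcost.symm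
  rw [L_pairs hG hL P v hv]
  ext u
  simp only [Set.mem_setOf_eq, median]
  constructor
  · intro h w
    rw [(hiff u).mp h]
    exact hlow w
  · intro h
    apply (hiff u).mpr
    have h1 := h v
    have h2 := hlow u
    omega

lemma cost_nsmul {G : SimpleGraph V} (n : ℕ) (π : Multiset V) (u : V) :
    cost G (n • π) u = n * cost G π u := by
  induction n with
  | zero => simp [cost]
  | succ m ih =>
    rw [succ_nsmul]
    simp only [cost, Multiset.map_add, Multiset.sum_add] at *
    rw [ih]; ring

lemma median_nsmul {G : SimpleGraph V} (n : ℕ) (hn : 1 ≤ n) (π : Multiset V) :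
    median G (n • π) = median G π := by
  ext u
  simp only [median, Set.mem_setOf_eq, cost_nsmul]
  constructor
  · intro h w
    exact Nat.le_of_mul_le_mul_left (h w) (by omega)
  · intro h w
    exact Nat.mul_le_mul le_rfl (h w)

lemma L_nsmul {G : SimpleGraph V} {L : Multiset V → Set V} (hL : IsABC G L)
    (n : ℕ) (hn : 1 ≤ n) (π : Multiset V) : L (n • π) = L π := by
  induction n with
  | zero => omega
  | succ m ih =>
    rcases Nat.eq_or_lt_of_le hn with h1 | h1
    · rw [← h1, one_smul]
    · have hm : 1 ≤ m := by omega
      have ihm := ih hm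
      obtain ⟨x, hx⟩ := hL.nonempty π
      rw [succ_nsmul, hL.consistency _ _ ⟨x, ihm ▸ hx, hx⟩, ihm, Set.inter_self]

/-- Lemma 17: for an ABC-function `L`: (1) if an even profile `π` admits a perfect
pairing then `L(π) = Med(π)`; (2) if `π^{2k}` admits a perfect pairing for some
`k ≥ 1`, then `L(π) = Med(π)`. -/
theorem stmt_13 [Fintype V] (G : SimpleGraph V) (hG : G.Connected)
    (L : Multiset V → Set V) (hL : IsABC G L) :
    (∀ π : Multiset V, HasPerfectPairing G π → L π = median G π) ∧
    (∀ (π : Multiset V) (k : ℕ), 1 ≤ k → HasPerfectPairing G ((2 * k) • π) →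
      L π = median G π) := by
  refine ⟨fun π h => part1 hG hL π h, fun π k hk h => ?_⟩
  have h2k : 1 ≤ 2 * k := by omega
  calc L π = L ((2 * k) • π) := (L_nsmul hL (2 * k) h2k π).symm
  _ = median G ((2 * k) • π) := part1 hG hL _ h
  _ = median G π := median_nsmul (2 * k) h2k π

end ArxivABC
end

section
/- If a finite connected simple graph G satisfies the double-pairing property, then G is a bipartite Helly graph. -/
namespace ArxivABC

variable {V : Type*}

/-- A half-ball: the intersection of the ball `B_r(v)` with a color class of the
2-coloring `c`. -/
def halfBall (G : SimpleGraph V) (c : V → Bool) (v : V) (r : ℕ) (b : Bool) : Set V :=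
  {x | G.dist v x ≤ r ∧ c x = b}

/-- A bipartite Helly graph: a connected bipartite graph in which the family of
half-balls has the Helly property (every finite family of pairwise intersecting
half-balls has a common vertex). -/
def IsBipartiteHelly (G : SimpleGraph V) : Prop :=
  G.Connected ∧ ∃ c : V → Bool, (∀ u v : V, G.Adj u v → c u ≠ c v) ∧
    ∀ (n : ℕ) (v : Fin n → V) (r : Fin n → ℕ) (b : Fin n → Bool),
      (∀ i j : Fin n,
        (halfBall G c (v i) (r i) (b i) ∩ halfBall G c (v j) (r j) (b j)).Nonempty) →
      (⋂ i : Fin n, halfBall G c (v i) (r i) (b i)).Nonempty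

/- ### auxiliary multiset lemmas -/

private lemma sum_map_eq_termwise {α : Type*} {s : Multiset α} {f g : α → ℕ}
    (hle : ∀ a ∈ s, f a ≤ g a) (heq : (s.map f).sum = (s.map g).sum) :
    ∀ a ∈ s, f a = g a := by
  induction s using Multiset.induction_on with
  | empty => simp
  | cons a s ih =>
    simp only [Multiset.map_cons, Multiset.sum_cons] at heq
    have h1 : f a ≤ g a := hle a (Multiset.mem_cons_self a s)
    have h2 : (s.map f).sum ≤ (s.map g).sum :=
      Multiset.sum_map_le_sum_map f g (fun i hi => hle i (Multiset.mem_cons_of_mem hi))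
    have hfa : f a = g a := by omega
    have hsum : (s.map f).sum = (s.map g).sum := by omega
    intro x hx
    rcases Multiset.mem_cons.1 hx with rfl | hx
    · exact hfa
    · exact ih (fun i hi => hle i (Multiset.mem_cons_of_mem hi)) hsum x hx

private lemma countP_or_le {α : Type*} (p q : α → Prop) [DecidablePred p] [DecidablePred q]
    (s : Multiset α) :
    s.countP (fun a => p a ∨ q a) ≤ s.countP p + s.countP q := by
  induction s using Multiset.induction_on with
  | empty => simp
  | cons a s ih =>
    simp only [Multiset.countP_cons]
    by_cases hp : p a <;> by_cases hq : q a
    · simp only [if_pos hp, if_pos hq, if_pos (Or.inl hp)]; omega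
    · simp only [if_pos hp, if_neg hq, if_pos (Or.inl hp)]; omega
    · simp only [if_neg hp, if_pos hq, if_pos (Or.inr hq)]; omega
    · simp only [if_neg hp, if_neg hq, if_neg (by tauto : ¬(p a ∨ q a))]; omega

private lemma countP_or_eq {α : Type*} (p q : α → Prop) [DecidablePred p] [DecidablePred q]
    {s : Multiset α} (h : ∀ a ∈ s, ¬(p a ∧ q a)) :
    s.countP (fun a => p a ∨ q a) = s.countP p + s.countP q := by
  induction s using Multiset.induction_on with
  | empty => simp
  | cons a s ih =>
    have ha := h a (Multiset.mem_cons_self a s)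
    have ih' := ih (fun x hx => h x (Multiset.mem_cons_of_mem hx))
    simp only [Multiset.countP_cons]
    by_cases hp : p a <;> by_cases hq : q a
    · exact absurd ⟨hp, hq⟩ ha
    · simp only [if_pos hp, if_pos (Or.inl hp), if_neg hq]; omega
    · simp only [if_pos hq, if_pos (Or.inr hq), if_neg hp]; omega
    · simp only [if_neg hp, if_neg hq, if_neg (by tauto : ¬(p a ∨ q a))]; omega

private lemma countP_le_countP {α : Type*} (p q : α → Prop) [DecidablePred p] [DecidablePred q]
    {s : Multiset α} (h : ∀ a ∈ s, p a → q a) :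
    s.countP p ≤ s.countP q := by
  induction s using Multiset.induction_on with
  | empty => simp
  | cons a s ih =>
    have ha := h a (Multiset.mem_cons_self a s)
    have ih' := ih (fun x hx => h x (Multiset.mem_cons_of_mem hx))
    simp only [Multiset.countP_cons]
    by_cases hp : p a <;> by_cases hq : q a
    · simp only [if_pos hp, if_pos hq]; omega
    · exact absurd (ha hp) hq
    · simp only [if_neg hp, if_pos hq]; omega
    · simp only [if_neg hp, if_neg hq]; omega

/- ### tightness of perfect pairings -/

private lemma pairing_tight {G : SimpleGraph V} (hG : G.Connected) {π : Multiset V}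
    {P : Multiset (V × V)} {m : V} (hP : IsPairing π P)
    (hc : pairingCost G P = cost G π m) :
    ∀ p ∈ P, G.dist p.1 p.2 = G.dist m p.1 + G.dist m p.2 := by
  have h1 : cost G π m = (P.map fun p => G.dist m p.1 + G.dist m p.2).sum := by
    rw [cost, ← hP, Multiset.map_add, Multiset.sum_add, Multiset.map_map, Multiset.map_map,
      Multiset.sum_map_add]
    rfl
  refine sum_map_eq_termwise (s := P) (f := fun p => G.dist p.1 p.2)
    (g := fun p => G.dist m p.1 + G.dist m p.2) ?_ ?_
  · intro p _
    have := hG.dist_triangle (u := p.1) (v := m) (w := p.2)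
    rw [SimpleGraph.dist_comm (u := p.1) (v := m)] at this
    exact this
  · rw [← h1, ← hc]; rfl

private lemma pairing_mem {π : Multiset V} {P : Multiset (V × V)} (hP : IsPairing π P)
    {p : V × V} (hp : p ∈ P) : p.1 ∈ π ∧ p.2 ∈ π := by
  constructor
  · rw [← hP]; exact Multiset.mem_add.2 (Or.inl (Multiset.mem_map_of_mem _ hp))
  · rw [← hP]; exact Multiset.mem_add.2 (Or.inr (Multiset.mem_map_of_mem _ hp))

/- ### the gate lemma -/

private lemma exists_adj_step {G : SimpleGraph V} (hG : G.Connected) {a b : V} (hne : a ≠ b) :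
    ∃ u, G.Adj a u ∧ G.dist u b + 1 = G.dist a b := by
  obtain ⟨p, hp⟩ := hG.exists_walk_length_eq_dist a b
  cases p with
  | nil => exact absurd rfl hne
  | @cons _ x _ hadj q =>
    refine ⟨x, hadj, ?_⟩
    have h1 : G.dist x b ≤ q.length := SimpleGraph.dist_le q
    have h2 : G.dist a b ≤ G.dist a x + G.dist x b := hG.dist_triangle
    have h3 : G.dist a x = 1 := SimpleGraph.dist_eq_one_iff_adj.2 hadj
    simp only [SimpleGraph.Walk.length_cons] at hp
    omega

private lemma gate {G : SimpleGraph V} (hG : G.Connected) (hdp : DoublePairingProperty G)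
    (v : V) (T : Multiset V) (hT : T ≠ 0)
    (hstrict : ∀ w ∈ T, ∀ w' ∈ T, G.dist w w' < G.dist v w + G.dist v w') :
    ∃ u, G.Adj v u ∧ ∀ w ∈ T, G.dist u w + 1 ≤ G.dist v w := by
  classical
  set t := Multiset.card T with ht
  have ht1 : 1 ≤ t := Multiset.card_pos.2 hT
  have hvT : v ∉ T := by
    intro hv
    have := hstrict v hv v hv
    simp [SimpleGraph.dist_self] at this
  set π : Multiset V := T + T + Multiset.replicate (2 * t - 1) v with hπdef
  obtain ⟨P, m, hPair, hCost⟩ := hdp π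
  have htight := pairing_tight hG hPair hCost
  -- memberships
  have hmem : ∀ x ∈ π + π, x ∈ T ∨ x = v := by
    intro x hx
    rcases Multiset.mem_add.1 hx with hx | hx <;>
    · rcases Multiset.mem_add.1 hx with hx | hx
      · rcases Multiset.mem_add.1 hx with hx | hx
        · exact Or.inl hx
        · exact Or.inl hx
      · exact Or.inr (Multiset.mem_replicate.1 hx).2
  -- counts
  have hcv : Multiset.count v (π + π) = 4 * t - 2 := by
    have hcvT : Multiset.count v T = 0 := Multiset.count_eq_zero.2 hvT
    simp only [π, Multiset.count_add, hcvT, Multiset.count_replicate_self]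
    omega
  have hcardP : Multiset.card P = 4 * t - 1 := by
    have := congrArg Multiset.card hPair
    simp only [Multiset.card_add, Multiset.card_map] at this
    have hπ : Multiset.card π = 4 * t - 1 := by
      simp only [π, Multiset.card_add, Multiset.card_replicate]
      omega
    simp only [Multiset.card_add, hπ] at this
    omega
  have hcnt_fst : P.countP (fun p => p.1 = v) = Multiset.count v (Multiset.map Prod.fst P) := by
    rw [Multiset.count_map, Multiset.countP_eq_card_filter]
    congr 1
    exact Multiset.filter_congr (fun p _ => by constructor <;> exact fun h => h.symm)
  have hcnt_snd : P.countP (fun p => p.2 = v) = Multiset.count v (Multiset.map Prod.snd P) := by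
    rw [Multiset.count_map, Multiset.countP_eq_card_filter]
    congr 1
    exact Multiset.filter_congr (fun p _ => by constructor <;> exact fun h => h.symm)
  have hcnt_sum : Multiset.count v (Multiset.map Prod.fst P)
      + Multiset.count v (Multiset.map Prod.snd P) = 4 * t - 2 := by
    rw [← Multiset.count_add, hPair]
    exact hcv
  -- m ≠ v
  have hmv : m ≠ v := by
    intro hmv
    subst hmv
    have hall : ∀ p ∈ P, p.1 = m ∨ p.2 = m := by
      intro p hp
      by_contra hcon
      push_neg at hcon
      obtain ⟨h1, h2⟩ := pairing_mem hPair hp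
      have h1' : p.1 ∈ T := (hmem _ h1).resolve_right hcon.1
      have h2' : p.2 ∈ T := (hmem _ h2).resolve_right hcon.2
      have hs := hstrict _ h1' _ h2'
      have he := htight p hp
      have c1 : G.dist m p.1 = G.dist p.1 m := SimpleGraph.dist_comm
      have c2 : G.dist m p.2 = G.dist p.2 m := SimpleGraph.dist_comm
      omega
    have hcard : Multiset.card P = P.countP (fun p => p.1 = m ∨ p.2 = m) :=
      (Multiset.countP_eq_card.2 hall).symm
    have hle := countP_or_le (fun p : V × V => p.1 = m) (fun p => p.2 = m) P
    omega
  -- no pair has both coordinates equal to v / in fact no pair (v,v)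
  have hnvv : ∀ p ∈ P, ¬(p.1 = v ∧ p.2 = v) := by
    rintro p hp ⟨h1, h2⟩
    have he := htight p hp
    rw [h1, h2, SimpleGraph.dist_self] at he
    have : G.dist m v = 0 := by omega
    exact hmv (hG.dist_eq_zero_iff.1 this)
  have hqn : P.countP (fun p => ¬(p.1 = v ∨ p.2 = v)) ≤ 1 := by
    have he := countP_or_eq (fun p : V × V => p.1 = v) (fun p => p.2 = v) hnvv
    have key : P.countP (fun p : V × V => p.1 = v ∨ p.2 = v) = 4 * t - 2 := by
      rw [he, hcnt_fst, hcnt_snd]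
      exact hcnt_sum
    have hsplit : P.countP (fun p : V × V => p.1 = v ∨ p.2 = v)
        + P.countP (fun p => ¬(p.1 = v ∨ p.2 = v)) = Multiset.card P := by
      rw [Multiset.countP_eq_card_filter, Multiset.countP_eq_card_filter,
        ← Multiset.card_add, Multiset.filter_add_not]
    omega
  -- each w in T is tightly paired with v
  have hmid : ∀ w ∈ T, G.dist v m + G.dist m w = G.dist v w := by
    intro w hw
    have hwv : w ≠ v := fun h => hvT (h ▸ hw)
    by_cases hex : ∃ p ∈ P, p = (v, w) ∨ p = (w, v)
    · obtain ⟨p, hp, hcase⟩ := hex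
      have he := htight p hp
      rcases hcase with rfl | rfl
      · simp only at he
        have c1 : G.dist m v = G.dist v m := SimpleGraph.dist_comm
        have c2 : G.dist v w = G.dist v w := rfl
        omega
      · simp only at he
        have c1 : G.dist m v = G.dist v m := SimpleGraph.dist_comm
        have c3 : G.dist w v = G.dist v w := SimpleGraph.dist_comm
        omega
    · exfalso
      push_neg at hex
      -- count w in π + π is at least 4
      have hcw : 4 ≤ Multiset.count w (π + π) := by
        have h1 : 1 ≤ Multiset.count w T := Multiset.one_le_count_iff_mem.2 hw
        have hcwr : Multiset.count w (Multiset.replicate (2 * t - 1) v) = 0 := by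
          rw [Multiset.count_replicate]
          simp [hwv.symm]
        simp only [π, Multiset.count_add, hcwr]
        omega
      have hcw_sum : Multiset.count w (Multiset.map Prod.fst P)
          + Multiset.count w (Multiset.map Prod.snd P) = Multiset.count w (π + π) := by
        rw [← Multiset.count_add, hPair]
      have hw_fst : P.countP (fun p => p.1 = w) ≤ P.countP (fun p => ¬(p.1 = v ∨ p.2 = v)) := by
        apply countP_le_countP
        rintro p hp h1 (h2 | h2)
        · exact hwv (h1 ▸ h2 ▸ rfl)
        · exact (hex p hp).2 (Prod.ext h1 h2)
      have hw_snd : P.countP (fun p => p.2 = w) ≤ P.countP (fun p => ¬(p.1 = v ∨ p.2 = v)) := by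
        apply countP_le_countP
        rintro p hp h1 (h2 | h2)
        · exact (hex p hp).1 (Prod.ext h2 h1)
        · exact hwv (h1 ▸ h2 ▸ rfl)
      have hcnt_fst' : P.countP (fun p => p.1 = w) = Multiset.count w (Multiset.map Prod.fst P) := by
        rw [Multiset.count_map, Multiset.countP_eq_card_filter]
        congr 1
        exact Multiset.filter_congr (fun p _ => by constructor <;> exact fun h => h.symm)
      have hcnt_snd' : P.countP (fun p => p.2 = w) = Multiset.count w (Multiset.map Prod.snd P) := by
        rw [Multiset.count_map, Multiset.countP_eq_card_filter]
        congr 1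
        exact Multiset.filter_congr (fun p _ => by constructor <;> exact fun h => h.symm)
      omega
  -- take a neighbor of v towards m
  obtain ⟨u, hadj, hu⟩ := exists_adj_step hG (Ne.symm hmv)
  refine ⟨u, hadj, fun w hw => ?_⟩
  have h1 := hmid w hw
  have h2 : G.dist u w ≤ G.dist u m + G.dist m w := hG.dist_triangle
  omega

/- ### bipartiteness -/

private lemma no_equidist {G : SimpleGraph V} (hG : G.Connected) (hdp : DoublePairingProperty G) :
    ∀ (r : ℕ) (u v x : V), G.Adj u v → G.dist x u = r → G.dist x v = r → False := by
  intro r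
  induction r with
  | zero =>
    intro u v x hadj h1 h2
    have hxu : x = u := hG.dist_eq_zero_iff.1 h1
    have hxv : x = v := hG.dist_eq_zero_iff.1 h2
    exact hadj.ne (by rw [← hxu, ← hxv])
  | succ r ih =>
    intro u v x hadj h1 h2
    have hd1 : G.dist u v = 1 := SimpleGraph.dist_eq_one_iff_adj.2 hadj
    have hstrict : ∀ w ∈ ({u, v} : Multiset V), ∀ w' ∈ ({u, v} : Multiset V),
        G.dist w w' < G.dist x w + G.dist x w' := by
      intro w hw w' hw'
      have hself : ∀ y : V, G.dist y y = 0 := fun y => SimpleGraph.dist_self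
      have hcomm : G.dist v u = 1 := by rw [SimpleGraph.dist_comm]; exact hd1
      have hw1 : w = u ∨ w = v := by simpa using hw
      have hw2 : w' = u ∨ w' = v := by simpa using hw'
      rcases hw1 with rfl | rfl <;> rcases hw2 with rfl | rfl
      · rw [hself]; omega
      · omega
      · omega
      · rw [hself]; omega
    obtain ⟨x', hadj', hx'⟩ := gate hG hdp x {u, v} (by simp) hstrict
    have hu := hx' u (by simp)
    have hv := hx' v (by simp)
    have h3 : G.dist x x' = 1 := SimpleGraph.dist_eq_one_iff_adj.2 hadj'
    have h4 : G.dist x u ≤ G.dist x x' + G.dist x' u := hG.dist_triangle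
    have h5 : G.dist x v ≤ G.dist x x' + G.dist x' v := hG.dist_triangle
    exact ih u v x' hadj (by omega) (by omega)

/- ### parity -/

private lemma adj_parity {G : SimpleGraph V} (hG : G.Connected) (hdp : DoublePairingProperty G)
    (x₀ : V) {a b : V} (hadj : G.Adj a b) :
    (G.dist x₀ a + G.dist x₀ b) % 2 = 1 := by
  have hne : G.dist x₀ a ≠ G.dist x₀ b := fun h =>
    no_equidist hG hdp (G.dist x₀ b) a b x₀ hadj h rfl
  have hab : G.dist a b = 1 := SimpleGraph.dist_eq_one_iff_adj.2 hadj
  have hba : G.dist b a = 1 := by rw [SimpleGraph.dist_comm]; exact hab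
  have h1 : G.dist x₀ a ≤ G.dist x₀ b + G.dist b a := hG.dist_triangle
  have h2 : G.dist x₀ b ≤ G.dist x₀ a + G.dist a b := hG.dist_triangle
  omega

private lemma walk_parity {G : SimpleGraph V} (hG : G.Connected) (hdp : DoublePairingProperty G)
    (x₀ : V) : ∀ {x y : V} (p : G.Walk x y),
    (p.length + G.dist x₀ x + G.dist x₀ y) % 2 = 0 := by
  intro x y p
  induction p with
  | nil => simp only [SimpleGraph.Walk.length_nil]; omega
  | @cons a c y hadj q ih =>
    have hp := adj_parity hG hdp x₀ hadj
    simp only [SimpleGraph.Walk.length_cons]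
    omega

private lemma dist_parity {G : SimpleGraph V} (hG : G.Connected) (hdp : DoublePairingProperty G)
    (x₀ : V) (x y : V) :
    (G.dist x y + G.dist x₀ x + G.dist x₀ y) % 2 = 0 := by
  obtain ⟨p, hp⟩ := hG.exists_walk_length_eq_dist x y
  have := walk_parity hG hdp x₀ p
  omega

/- ### the Helly property for balls with parity-coherent radii -/

private lemma helly_core {G : SimpleGraph V} (hG : G.Connected) (hdp : DoublePairingProperty G)
    (x₀ : V) :
    ∀ (s n : ℕ) (v : Fin n → V) (ρ : Fin n → ℕ),
      (∑ i, ρ i) ≤ s →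
      (∀ i j, G.dist (v i) (v j) ≤ ρ i + ρ j) →
      (∀ i j, (G.dist (v i) (v j) + ρ i + ρ j) % 2 = 0) →
      ∃ m, ∀ i, G.dist m (v i) ≤ ρ i := by
  classical
  intro s
  induction s with
  | zero =>
    intro n v ρ hsum hpw _
    rcases Nat.eq_zero_or_pos n with hn | hn
    · subst hn; exact ⟨x₀, fun i => i.elim0⟩
    set i0 : Fin n := ⟨0, hn⟩
    refine ⟨v i0, fun i => ?_⟩
    have h1 : ρ i0 ≤ ∑ j, ρ j := Finset.single_le_sum (fun j _ => Nat.zero_le _) (Finset.mem_univ i0)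
    have h2 : ρ i ≤ ∑ j, ρ j := Finset.single_le_sum (fun j _ => Nat.zero_le _) (Finset.mem_univ i)
    have := hpw i0 i
    omega
  | succ s ih =>
    intro n v ρ hsum hpw hpar
    rcases Nat.eq_zero_or_pos n with hn | hn
    · subst hn; exact ⟨x₀, fun i => i.elim0⟩
    set i0 : Fin n := ⟨0, hn⟩
    by_cases hcase : ∀ j, G.dist (v i0) (v j) ≤ ρ j
    · exact ⟨v i0, hcase⟩
    push_neg at hcase
    obtain ⟨jstar, hjstar⟩ := hcase
    have hρ0 : 1 ≤ ρ i0 := by have := hpw i0 jstar; omega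
    set Tf : Finset (Fin n) := Finset.univ.filter (fun j => G.dist (v i0) (v j) = ρ i0 + ρ j)
      with hTf
    by_cases hTe : Tf = ∅
    · -- no tight constraint: shrink ρ i0 by 2
      have hnt : ∀ j, G.dist (v i0) (v j) + 2 ≤ ρ i0 + ρ j ∨ j = i0 := by
        intro j
        by_cases hj : j = i0
        · exact Or.inr hj
        have hne : G.dist (v i0) (v j) ≠ ρ i0 + ρ j := by
          intro h
          have : j ∈ Tf := by rw [hTf]; simp [h]
          rw [hTe] at this
          exact absurd this (Finset.notMem_empty j)
        have := hpw i0 j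
        have := hpar i0 j
        omega
      have hρ02 : 2 ≤ ρ i0 := by
        rcases hnt jstar with h | h
        · omega
        · rw [h, SimpleGraph.dist_self] at hjstar
          omega
      set ρ' : Fin n → ℕ := Function.update ρ i0 (ρ i0 - 2) with hρ'
      have hsum' : (∑ i, ρ' i) ≤ s := by
        have h1 : ∑ i, ρ' i = (ρ i0 - 2) + ∑ i ∈ Finset.univ.erase i0, ρ i := by
          rw [hρ', Finset.sum_update_of_mem (Finset.mem_univ i0),
            Finset.sdiff_singleton_eq_erase]
        have h2 : ∑ i, ρ i = ρ i0 + ∑ i ∈ Finset.univ.erase i0, ρ i :=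
          (Finset.add_sum_erase _ ρ (Finset.mem_univ i0)).symm
        omega
      have hup : ∀ j, j ≠ i0 → ρ' j = ρ j := fun j hj => Function.update_of_ne hj _ _
      have hup0 : ρ' i0 = ρ i0 - 2 := Function.update_self _ _ _
      have hpw' : ∀ i j, G.dist (v i) (v j) ≤ ρ' i + ρ' j := by
        intro i j
        by_cases hi : i = i0 <;> by_cases hj : j = i0
        · subst hi; subst hj
          rw [hup0, SimpleGraph.dist_self]
          omega
        · subst hi
          rw [hup0, hup j hj]
          rcases hnt j with h | h
          · omega
          · exact absurd h hj
        · subst hj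
          rw [hup0, hup i hi]
          rcases hnt i with h | h
          · rw [SimpleGraph.dist_comm]; omega
          · exact absurd h hi
        · rw [hup i hi, hup j hj]; exact hpw i j
      have hpar' : ∀ i j, (G.dist (v i) (v j) + ρ' i + ρ' j) % 2 = 0 := by
        intro i j
        by_cases hi : i = i0 <;> by_cases hj : j = i0
        · subst hi; subst hj
          rw [hup0]
          have := hpar i0 i0
          omega
        · subst hi
          rw [hup0, hup j hj]
          have := hpar i0 j
          omega
        · subst hj
          rw [hup0, hup i hi]
          have := hpar i i0
          omega
        · rw [hup i hi, hup j hj]; exact hpar i j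
      obtain ⟨m, hm⟩ := ih n v ρ' hsum' hpw' hpar'
      refine ⟨m, fun i => ?_⟩
      have := hm i
      by_cases hi : i = i0
      · subst hi; rw [hup0] at this; omega
      · rw [hup i hi] at this; exact this
    · -- there is a tight constraint: use the gate lemma
      have hTfne : Tf.Nonempty := Finset.nonempty_iff_ne_empty.2 hTe
      set T₀ : Multiset V := Tf.val.map v with hT₀
      have hT₀ne : T₀ ≠ 0 := by
        obtain ⟨j, hj⟩ := hTfne
        have : v j ∈ T₀ := Multiset.mem_map_of_mem v hj
        exact fun h0 => by rw [h0] at this; exact absurd this (Multiset.notMem_zero _)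
      have hmemT : ∀ w ∈ T₀, ∃ j, j ∈ Tf ∧ w = v j := by
        intro w hw
        obtain ⟨j, hj, rfl⟩ := Multiset.mem_map.1 hw
        exact ⟨j, hj, rfl⟩
      have htightT : ∀ j ∈ Tf, G.dist (v i0) (v j) = ρ i0 + ρ j := by
        intro j hj
        rw [hTf] at hj
        exact (Finset.mem_filter.1 hj).2
      have hstrict : ∀ w ∈ T₀, ∀ w' ∈ T₀, G.dist w w' < G.dist (v i0) w + G.dist (v i0) w' := by
        intro w hw w' hw'
        obtain ⟨j, hj, rfl⟩ := hmemT w hw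
        obtain ⟨k, hk, rfl⟩ := hmemT w' hw'
        have h1 := htightT j hj
        have h2 := htightT k hk
        have h3 := hpw j k
        omega
      obtain ⟨u, hadj, hu⟩ := gate hG hdp (v i0) T₀ hT₀ne hstrict
      have hadj1 : G.dist (v i0) u = 1 := SimpleGraph.dist_eq_one_iff_adj.2 hadj
      have hadj1' : G.dist u (v i0) = 1 := by rw [SimpleGraph.dist_comm]; exact hadj1
      have huj : ∀ j, j ≠ i0 → G.dist u (v j) + 1 ≤ ρ i0 + ρ j := by
        intro j hj
        by_cases hjT : j ∈ Tf
        · have := hu (v j) (Multiset.mem_map_of_mem v hjT)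
          have := htightT j hjT
          omega
        · have hne : G.dist (v i0) (v j) ≠ ρ i0 + ρ j := by
            intro h
            exact hjT (by rw [hTf]; simp [h])
          have h1 := hpw i0 j
          have h2 := hpar i0 j
          have h3 : G.dist u (v j) ≤ G.dist u (v i0) + G.dist (v i0) (v j) := hG.dist_triangle
          omega
      have hujpar : ∀ j, (G.dist u (v j) + G.dist (v i0) (v j)) % 2 = 1 := by
        intro j
        have h1 := dist_parity hG hdp x₀ u (v j)
        have h2 := dist_parity hG hdp x₀ (v i0) (v j)
        have h3 := adj_parity hG hdp x₀ hadj
        omega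
      set v' : Fin n → V := Function.update v i0 u with hv'
      set ρ' : Fin n → ℕ := Function.update ρ i0 (ρ i0 - 1) with hρ'
      have hupv : ∀ j, j ≠ i0 → v' j = v j := fun j hj => Function.update_of_ne hj _ _
      have hupv0 : v' i0 = u := Function.update_self _ _ _
      have hup : ∀ j, j ≠ i0 → ρ' j = ρ j := fun j hj => Function.update_of_ne hj _ _
      have hup0 : ρ' i0 = ρ i0 - 1 := Function.update_self _ _ _
      have hsum' : (∑ i, ρ' i) ≤ s := by
        have h1 : ∑ i, ρ' i = (ρ i0 - 1) + ∑ i ∈ Finset.univ.erase i0, ρ i := by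
          rw [hρ', Finset.sum_update_of_mem (Finset.mem_univ i0),
            Finset.sdiff_singleton_eq_erase]
        have h2 : ∑ i, ρ i = ρ i0 + ∑ i ∈ Finset.univ.erase i0, ρ i :=
          (Finset.add_sum_erase _ ρ (Finset.mem_univ i0)).symm
        omega
      have hpw' : ∀ i j, G.dist (v' i) (v' j) ≤ ρ' i + ρ' j := by
        intro i j
        by_cases hi : i = i0 <;> by_cases hj : j = i0
        · subst hi; subst hj
          rw [hupv0, hup0, SimpleGraph.dist_self]
          omega
        · subst hi
          rw [hupv0, hup0, hupv j hj, hup j hj]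
          have := huj j hj
          omega
        · subst hj
          rw [hupv0, hup0, hupv i hi, hup i hi, SimpleGraph.dist_comm]
          have := huj i hi
          omega
        · rw [hupv i hi, hupv j hj, hup i hi, hup j hj]; exact hpw i j
      have hpar' : ∀ i j, (G.dist (v' i) (v' j) + ρ' i + ρ' j) % 2 = 0 := by
        intro i j
        by_cases hi : i = i0 <;> by_cases hj : j = i0
        · subst hi; subst hj
          rw [hupv0, hup0, SimpleGraph.dist_self]
          have := hpar i0 i0
          have := SimpleGraph.dist_self (G := G) (v := v i0)
          omega
        · subst hi
          rw [hupv0, hup0, hupv j hj, hup j hj]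
          have h1 := hujpar j
          have h2 := hpar i0 j
          omega
        · subst hj
          rw [hupv0, hup0, hupv i hi, hup i hi, SimpleGraph.dist_comm]
          have h1 := hujpar i
          have h2 := hpar i0 i
          have h3 : G.dist (v i0) (v i) = G.dist (v i) (v i0) := SimpleGraph.dist_comm
          omega
        · rw [hupv i hi, hupv j hj, hup i hi, hup j hj]; exact hpar i j
      obtain ⟨m, hm⟩ := ih n v' ρ' hsum' hpw' hpar'
      refine ⟨m, fun i => ?_⟩
      by_cases hi : i = i0
      · subst hi
        have h1 := hm i0
        rw [hupv0, hup0] at h1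
        have h2 : G.dist m (v i0) ≤ G.dist m u + G.dist u (v i0) := hG.dist_triangle
        omega
      · have h1 := hm i
        rw [hupv i hi, hup i hi] at h1
        exact h1

private theorem bipartiteHelly_aux [Fintype V] (G : SimpleGraph V) (hG : G.Connected)
    (hdp : DoublePairingProperty G) :
    G.Connected ∧ ∃ c : V → Bool, (∀ u v : V, G.Adj u v → c u ≠ c v) ∧
    ∀ (n : ℕ) (v : Fin n → V) (r : Fin n → ℕ) (b : Fin n → Bool),
      (∀ i j : Fin n,
        ({x | G.dist (v i) x ≤ r i ∧ c x = b i} ∩ {x | G.dist (v j) x ≤ r j ∧ c x = b j} :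
          Set V).Nonempty) →
      (⋂ i : Fin n, {x | G.dist (v i) x ≤ r i ∧ c x = b i} : Set V).Nonempty := by
  classical
  obtain ⟨x₀⟩ := hG.nonempty
  set c : V → Bool := fun x => decide (G.dist x₀ x % 2 = 1) with hc
  have hmod : ∀ x : V, G.dist x₀ x % 2 = 0 ∨ G.dist x₀ x % 2 = 1 :=
    fun x => Nat.mod_two_eq_zero_or_one _
  have hcEq : ∀ (x : V) (b : Bool), c x = b ↔ G.dist x₀ x % 2 = Bool.rec 0 1 b := by
    intro x b
    cases b
    · simp only [hc, decide_eq_false_iff_not]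
      have := hmod x
      constructor
      · intro h; omega
      · intro h; omega
    · simp only [hc, decide_eq_true_eq]
  have hproper : ∀ u v : V, G.Adj u v → c u ≠ c v := by
    intro u v hadj h
    have hp := adj_parity hG hdp x₀ hadj
    cases hcu : c u
    · rw [hcu] at h
      have h1 := (hcEq u false).1 hcu
      have h2 := (hcEq v false).1 h.symm
      simp only at h1 h2
      omega
    · rw [hcu] at h
      have h1 := (hcEq u true).1 hcu
      have h2 := (hcEq v true).1 h.symm
      simp only at h1 h2
      omega
  refine ⟨hG, c, hproper, ?_⟩
  intro n v r b hpair
  rcases Nat.eq_zero_or_pos n with hn | hn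
  · subst hn
    exact ⟨x₀, Set.mem_iInter.2 (fun i => i.elim0)⟩
  set i0 : Fin n := ⟨0, hn⟩
  -- all color targets must be equal; define numeric color data
  set κ : V → ℕ := fun x => G.dist x₀ x % 2 with hκ
  have hκ01 : ∀ x, κ x = 0 ∨ κ x = 1 := hmod
  have hcEq' : ∀ (x : V) (b' : Bool), c x = b' ↔ κ x = Bool.rec 0 1 b' := hcEq
  have hpar2 : ∀ x y : V, (G.dist x y + κ x + κ y) % 2 = 0 := by
    intro x y
    have := dist_parity hG hdp x₀ x y
    simp only [hκ]
    omega
  -- each family must have the same color target for the argument; but b may vary.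
  -- From pairwise nonempty intersections, witnesses exist; colors must agree.
  have hwit : ∀ i j, ∃ x : V, G.dist (v i) x ≤ r i ∧ c x = b i ∧
      G.dist (v j) x ≤ r j ∧ c x = b j := by
    intro i j
    obtain ⟨x, hx1, hx2⟩ := hpair i j
    exact ⟨x, hx1.1, hx1.2, hx2.1, hx2.2⟩
  have hbeq : ∀ i, b i = b i0 := by
    intro i
    obtain ⟨x, _, hx2, _, hx4⟩ := hwit i i0
    rw [← hx2, hx4]
  set b0 : Bool := b i0 with hb0
  set β : ℕ := Bool.rec 0 1 b0 with hβ
  have hβ01 : β = 0 ∨ β = 1 := by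
    rcases Bool.eq_false_or_eq_true b0 with h | h <;> simp [hβ, h]
  set ρ : Fin n → ℕ := fun i => r i - ((r i + κ (v i) + β) % 2) with hρ
  -- witness facts per index
  have hfact : ∀ i, (ρ i + κ (v i) + β) % 2 = 0 ∧ ρ i ≤ r i := by
    intro i
    obtain ⟨x, hx1, hx2, _, _⟩ := hwit i i0
    have hxκ : κ x = β := by
      have h := (hcEq' x (b i)).1 hx2
      rw [hbeq i] at h
      rw [hβ]
      exact h
    have hdp2 := hpar2 (v i) x
    have hκ1 := hκ01 (v i)
    have hκ2 := hκ01 x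
    constructor
    · simp only [hρ]; omega
    · simp only [hρ]; omega
  have hmem : ∀ i x, (G.dist (v i) x ≤ r i ∧ c x = b i) ↔ (G.dist (v i) x ≤ ρ i ∧ κ x = β) := by
    intro i x
    have h1 := hfact i
    have h2 := hpar2 (v i) x
    have hκ1 := hκ01 (v i)
    have hκ2 := hκ01 x
    have hcx : c x = b i ↔ κ x = β := by
      rw [hbeq i, hβ]
      exact hcEq' x b0
    constructor
    · rintro ⟨ha, hb⟩
      have hxκ := hcx.1 hb
      refine ⟨?_, hxκ⟩
      simp only [hρ]
      omega
    · rintro ⟨ha, hb⟩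
      exact ⟨by omega, hcx.2 hb⟩
  have hpw : ∀ i j, G.dist (v i) (v j) ≤ ρ i + ρ j := by
    intro i j
    obtain ⟨x, hx1, hx2, hx3, hx4⟩ := hwit i j
    have h1 := (hmem i x).1 ⟨hx1, hx2⟩
    have h2 := (hmem j x).1 ⟨hx3, hx4⟩
    have h3 : G.dist (v i) (v j) ≤ G.dist (v i) x + G.dist x (v j) := hG.dist_triangle
    have h4 : G.dist x (v j) = G.dist (v j) x := SimpleGraph.dist_comm
    omega
  have hparc : ∀ i j, (G.dist (v i) (v j) + ρ i + ρ j) % 2 = 0 := by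
    intro i j
    have h1 := (hfact i).1
    have h2 := (hfact j).1
    have h3 := hpar2 (v i) (v j)
    have hκ1 := hκ01 (v i)
    have hκ2 := hκ01 (v j)
    omega
  obtain ⟨m, hm⟩ := helly_core hG hdp x₀ (∑ i, ρ i) n v ρ (le_refl _) hpw hparc
  by_cases hcm : κ m = β
  · refine ⟨m, Set.mem_iInter.2 (fun i => ?_)⟩
    have h1 : G.dist (v i) m = G.dist m (v i) := SimpleGraph.dist_comm
    exact (hmem i m).2 ⟨by have := hm i; omega, hcm⟩
  · -- move to a neighbor of m
    have hstrict : ∀ i, G.dist m (v i) + 1 ≤ ρ i := by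
      intro i
      have h1 := hm i
      have h2 := hpar2 m (v i)
      have h3 := (hfact i).1
      have hκ1 := hκ01 m
      have hκ2 := hκ01 (v i)
      omega
    -- m has a neighbor
    obtain ⟨x, hx1, hx2, _, _⟩ := hwit i0 i0
    have hxκ : κ x = β := by
      have h := (hcEq' x (b i0)).1 hx2
      rw [hbeq i0] at h
      rw [hβ]
      exact h
    have hxm : x ≠ m := fun h => hcm (h ▸ hxκ)
    obtain ⟨u, hadj, _⟩ := exists_adj_step hG (Ne.symm hxm)
    have huκ : κ u = β := by
      have hp := adj_parity hG hdp x₀ hadj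
      have hκ1 := hκ01 m
      have hκ2 := hκ01 u
      simp only [hκ] at *
      omega
    refine ⟨u, Set.mem_iInter.2 (fun i => ?_)⟩
    refine (hmem i u).2 ⟨?_, huκ⟩
    have h1 := hstrict i
    have h2 : G.dist (v i) u ≤ G.dist (v i) m + G.dist m u := hG.dist_triangle
    have h3 : G.dist m u = 1 := SimpleGraph.dist_eq_one_iff_adj.2 hadj
    have h4 : G.dist (v i) m = G.dist m (v i) := SimpleGraph.dist_comm
    omega


/-- Proposition 22: a graph with the double-pairing property is a bipartite Helly
graph. -/
theorem stmt_15 [Fintype V] (G : SimpleGraph V) (hG : G.Connected)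
    (hdp : DoublePairingProperty G) :
    IsBipartiteHelly G := by
  unfold IsBipartiteHelly halfBall
  exact bipartiteHelly_aux G hG hdp

end ArxivABC
end

section
/- There exists a finite bipartite Helly graph that does not satisfy the pairing property, and there exists a finite bipartite Helly graph that does not satisfy the double-pairing property. -/
namespace ArxivABC

variable {V : Type*}

/-! `K_{3,3}` is bipartite Helly because each of its half-balls is empty, a single vertex, or a
whole colour class. For the profile of all six vertices every vertex has total distance
`2 + 2 + 1 + 1 + 1 = 7`, while a pairing consists of three pairs at distance at most `2`; doubling
the profile doubles both sides (`14 > 12`). -/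

lemma IsPairing.card_eq {π : Multiset V} {P : Multiset (V × V)} (h : IsPairing π P) :
    Multiset.card π = 2 * Multiset.card P := by
  rw [← h, Multiset.card_add, Multiset.card_map, Multiset.card_map, two_mul]

lemma pairingCost_le {G : SimpleGraph V} {D : ℕ} (hD : ∀ u v, G.dist u v ≤ D)
    (P : Multiset (V × V)) : pairingCost G P ≤ D * Multiset.card P := by
  simpa [pairingCost, mul_comm] using
    Multiset.sum_le_card_nsmul (P.map fun p => G.dist p.1 p.2) D
      (by simp only [Multiset.mem_map]; rintro _ ⟨p, -, rfl⟩; exact hD p.1 p.2)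

lemma cost_add (G : SimpleGraph V) (π ρ : Multiset V) (v : V) :
    cost G (π + ρ) v = cost G π v + cost G ρ v := by
  simp only [cost, Multiset.map_add, Multiset.sum_add]

lemma not_hasPerfectPairing_of_lt_cost {G : SimpleGraph V} {D : ℕ} {π : Multiset V}
    (hD : ∀ u v, G.dist u v ≤ D) (hπ : ∀ v, D * Multiset.card π < 2 * cost G π v) :
    ¬ HasPerfectPairing G π := by
  rintro ⟨P, v, hP, hcost⟩
  have := pairingCost_le hD P
  have := hπ v
  rw [hP.card_eq] at this
  nlinarith

lemma helly_of_halfBall_subsingleton_or_eq_colorClass [Nonempty V] (G : SimpleGraph V)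
    (c : V → Bool)
    (h : ∀ v r b, (halfBall G c v r b).Subsingleton ∨ halfBall G c v r b = {x | c x = b})
    (n : ℕ) (v : Fin n → V) (r : Fin n → ℕ) (b : Fin n → Bool)
    (hpair : ∀ i j : Fin n,
      (halfBall G c (v i) (r i) (b i) ∩ halfBall G c (v j) (r j) (b j)).Nonempty) :
    (⋂ i : Fin n, halfBall G c (v i) (r i) (b i)).Nonempty := by
  by_cases hsub : ∃ i, (halfBall G c (v i) (r i) (b i)).Subsingleton
  · obtain ⟨i, hi⟩ := hsub
    obtain ⟨x, hx, -⟩ := hpair i i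
    refine ⟨x, Set.mem_iInter.mpr fun j => ?_⟩
    obtain ⟨y, hyi, hyj⟩ := hpair i j
    rwa [hi hx hyi]
  · simp only [not_exists] at hsub
    have hclass : ∀ i, halfBall G c (v i) (r i) (b i) = {x | c x = b i} :=
      fun i => (h _ _ _).resolve_left (hsub i)
    rcases n.eq_zero_or_pos with rfl | hn
    · exact ⟨Classical.arbitrary V, Set.mem_iInter.mpr (·.elim0)⟩
    obtain ⟨x, hx, -⟩ := hpair ⟨0, hn⟩ ⟨0, hn⟩
    refine ⟨x, Set.mem_iInter.mpr fun j => ?_⟩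
    obtain ⟨y, hy0, hyj⟩ := hpair ⟨0, hn⟩ j
    rw [hclass] at hx hy0 hyj ⊢
    exact hx.trans (hy0.symm.trans hyj)

abbrev completeBipartiteOn (c : V → Bool) : SimpleGraph V :=
  (⊤ : SimpleGraph Bool).comap c

section completeBipartiteOn

variable {c : V → Bool}

lemma completeBipartiteOn_adj {u v : V} : (completeBipartiteOn c).Adj u v ↔ c u ≠ c v := by
  simp

lemma completeBipartiteOn_dist [DecidableEq V] (hc : Function.Surjective c) (u v : V) :
    (completeBipartiteOn c).dist u v = if u = v then 0 else if c u = c v then 2 else 1 := by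
  split_ifs with huv hcuv
  · rw [huv, SimpleGraph.dist_self]
  · obtain ⟨w, hw⟩ := hc (!c u)
    have hcommon : w ∈ (completeBipartiteOn c).commonNeighbors u v := by
      simp [SimpleGraph.mem_commonNeighbors, hw, ← hcuv]
    rw [SimpleGraph.dist, SimpleGraph.edist_eq_two_iff.mpr
      ⟨huv, by simp [hcuv], ⟨w, hcommon⟩⟩]
    rfl
  · exact SimpleGraph.dist_eq_one_iff_adj.mpr (completeBipartiteOn_adj.mpr hcuv)

lemma completeBipartiteOn_dist_le_two (hc : Function.Surjective c) (u v : V) :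
    (completeBipartiteOn c).dist u v ≤ 2 := by
  classical
  rw [completeBipartiteOn_dist hc]
  split_ifs <;> omega

lemma completeBipartiteOn_connected (hc : Function.Surjective c) :
    (completeBipartiteOn c).Connected := by
  classical
  have : Nonempty V := ⟨(hc true).choose⟩
  refine ⟨fun u v => ?_⟩
  by_cases huv : u = v
  · exact huv ▸ SimpleGraph.Reachable.refl u
  refine (SimpleGraph.dist_ne_zero_iff_ne_and_reachable.mp ?_).2
  rw [completeBipartiteOn_dist hc]
  split_ifs <;> omega

/-- A vertex of colour `b` is at distance `0`, `1` or `2` from `v` according as it is `v`, lies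
across from `v`, or lies on the side of `v`. -/
lemma halfBall_completeBipartiteOn (hc : Function.Surjective c) (v : V) (r : ℕ) (b : Bool) :
    (halfBall (completeBipartiteOn c) c v r b).Subsingleton ∨
      halfBall (completeBipartiteOn c) c v r b = {x | c x = b} := by
  classical
  by_cases hsmall : r = 0 ∨ (r = 1 ∧ c v = b)
  · left
    refine (Set.subsingleton_singleton (a := v)).anti fun x ⟨hx, hcx⟩ => ?_
    rw [completeBipartiteOn_dist hc] at hx
    rw [Set.mem_singleton_iff]
    by_contra hxv
    split_ifs at hx with h1 h2 <;> grind
  · right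
    ext x
    refine ⟨And.right, fun hcx => ⟨?_, hcx⟩⟩
    rw [completeBipartiteOn_dist hc]
    split_ifs <;> grind

lemma isBipartiteHelly_completeBipartiteOn (hc : Function.Surjective c) :
    IsBipartiteHelly (completeBipartiteOn c) :=
  have : Nonempty V := ⟨(hc true).choose⟩
  ⟨completeBipartiteOn_connected hc, c, fun _ _ => completeBipartiteOn_adj.mp,
    helly_of_halfBall_subsingleton_or_eq_colorClass _ c (halfBall_completeBipartiteOn hc)⟩

end completeBipartiteOn

/-- The colouring whose complete bipartite graph is `K_{3,3}` on sides `{0, 1, 2}`, `{3, 4, 5}`. -/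
def side33 (v : Fin 6) : Bool := v < 3

lemma side33_surjective : Function.Surjective side33 := by decide

lemma cost_univ_side33 (v : Fin 6) :
    cost (completeBipartiteOn side33) Finset.univ.val v = 7 := by
  simp only [cost, completeBipartiteOn_dist side33_surjective v]
  revert v
  decide

/-- Proposition 28: there exist bipartite Helly graphs which do not satisfy the
pairing property (respectively, the double-pairing property). -/
theorem stmt_16 :
    (∃ (n : ℕ) (G : SimpleGraph (Fin n)), IsBipartiteHelly G ∧ ¬ PairingProperty G) ∧
    (∃ (n : ℕ) (G : SimpleGraph (Fin n)),
      IsBipartiteHelly G ∧ ¬ DoublePairingProperty G) := by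
  have hK := isBipartiteHelly_completeBipartiteOn side33_surjective
  have hdiam := completeBipartiteOn_dist_le_two side33_surjective
  have hcard : Multiset.card (Finset.univ : Finset (Fin 6)).val = 6 := rfl
  refine ⟨⟨6, _, hK, fun h => ?_⟩, ⟨6, _, hK, fun h => ?_⟩⟩
  · refine not_hasPerfectPairing_of_lt_cost hdiam (fun v => ?_) (h _ ⟨3, hcard⟩)
    rw [hcard, cost_univ_side33]
    norm_num
  · refine not_hasPerfectPairing_of_lt_cost hdiam (fun v => ?_) (h Finset.univ.val)
    rw [Multiset.card_add, hcard, cost_add, cost_univ_side33]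
    norm_num

end ArxivABC
end

section
/- A finite bipartite Helly graph G satisfies the pairing property if and only if for every vertex u of G, the subgraph of G induced by the ball B_2(u) of radius 2 centered at u satisfies the pairing property (with respect to its own shortest-path metric). The same equivalence holds with 'pairing property' replaced by 'double-pairing property'. -/
namespace ArxivABC

variable {V : Type*}

/-!
In a bipartite Helly graph, a vertex `v` lies outside the interval `I(a, b)` exactly when
some neighbour of `v` is closer to both `a` and `b`, and every ball is an isometric
subgraph. Given a profile `π`, take a median `v` and move each `x ∈ π` to a vertex `p x` of
`B_2(v)` on a geodesic from `v` to `x` that is still approached by every neighbour of `v`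
approaching `x` (Helly property again). A perfect pairing of `π.map p` inside `B_2(v)` makes
`v` a median of `π.map p` lying between the images of each pair, hence between the pair
itself, which is a perfect pairing of `π` at `v`. Conversely, a perfect pairing of a profile
in a ball can always be realised at a median inside that ball.
-/

open SimpleGraph

section Metric

variable {G : SimpleGraph V}

lemma exists_mem_interval_dist_eq (hconn : G.Connected) {x y : V} {s : ℕ}
    (hs : s ≤ G.dist x y) : ∃ z ∈ interval G x y, G.dist x z = s := by
  obtain ⟨p, hp⟩ := hconn.exists_walk_length_eq_dist x y
  have h₁ := dist_le (p.take s)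
  have h₂ := dist_le (p.drop s)
  have h₃ : G.dist x y ≤ G.dist x (p.getVert s) + G.dist (p.getVert s) y := hconn.dist_triangle
  simp only [Walk.take_length, Walk.drop_length] at h₁ h₂
  exact ⟨p.getVert s, by simp only [interval, Set.mem_ofPred_eq]; omega, by omega⟩

lemma exists_adj_dist_eq (hconn : G.Connected) {x y : V} {k : ℕ} (h : G.dist x y = k + 1) :
    ∃ z, G.Adj x z ∧ G.dist z y = k := by
  obtain ⟨z, hz, hxz⟩ := exists_mem_interval_dist_eq hconn (x := x) (y := y) (s := 1) (by omega)
  simp only [interval, Set.mem_ofPred_eq] at hz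
  exact ⟨z, dist_eq_one_iff_adj.1 hxz, by omega⟩

lemma dist_induce_eq_of_exists_adj {s : Set V} (hconn : G.Connected)
    (hs : ∀ x ∈ s, ∀ y ∈ s, ∀ k, G.dist x y = k + 1 →
      ∃ z ∈ s, G.Adj x z ∧ G.dist z y = k)
    (x y : s) : (G.induce s).dist x y = G.dist x y := by
  have walk : ∀ k (x y : s), G.dist x y = k → ∃ q : (G.induce s).Walk x y, q.length = k := by
    intro k
    induction k with
    | zero =>
      intro x y h
      obtain rfl : x = y := Subtype.ext (hconn.dist_eq_zero_iff.1 h)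
      exact ⟨.nil, rfl⟩
    | succ k ih =>
      intro x y h
      obtain ⟨z, hz, hxz, hzy⟩ := hs x x.2 y y.2 k h
      obtain ⟨q, hq⟩ := ih ⟨z, hz⟩ y hzy
      exact ⟨.cons (show (G.induce s).Adj x ⟨z, hz⟩ from hxz) q, by simp [hq]⟩
  obtain ⟨q, hq⟩ := walk _ x y rfl
  obtain ⟨q', hq'⟩ := q.reachable.exists_walk_length_eq_dist
  refine le_antisymm (hq ▸ dist_le q) ?_
  calc G.dist x y ≤ (q'.map (Embedding.induce s).toHom).length := dist_le _
    _ = (G.induce s).dist x y := by rw [Walk.length_map, hq']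

end Metric

section Bipartite

variable {G : SimpleGraph V} {c : V → Bool}

lemma color_eq_iff_even_length (hc : ∀ u v, G.Adj u v → c u ≠ c v) {x y : V}
    (p : G.Walk x y) : c x = c y ↔ Even p.length := by
  induction p with
  | nil => simp
  | cons h q ih =>
    rw [Walk.length_cons, Nat.even_add_one, ← ih]
    have := hc _ _ h
    revert this
    cases c _ <;> cases c _ <;> cases c _ <;> simp

lemma color_eq_iff_even_dist (hconn : G.Connected) (hc : ∀ u v, G.Adj u v → c u ≠ c v)
    (x y : V) : c x = c y ↔ Even (G.dist x y) := by
  obtain ⟨p, hp⟩ := hconn.exists_walk_length_eq_dist x y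
  rw [← hp, color_eq_iff_even_length hc]

lemma even_dist_add_dist_add_dist (hconn : G.Connected) (hc : ∀ u v, G.Adj u v → c u ≠ c v)
    (x y z : V) : Even (G.dist x y + G.dist y z + G.dist x z) := by
  simp only [Nat.even_add, ← color_eq_iff_even_dist hconn hc]
  cases c x <;> cases c y <;> cases c z <;> decide

lemma color_eq_iff_of_dist_eq_add (hconn : G.Connected) (hc : ∀ u v, G.Adj u v → c u ≠ c v)
    {x y : V} {s t : ℕ} {b : Bool} (hxy : G.dist x y = s + t) (hx : c x = b ↔ Even s) :
    c y = b ↔ Even t := by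
  have h := color_eq_iff_even_dist hconn hc x y
  rw [hxy, Nat.even_add] at h
  generalize Even s = p at *
  generalize Even t = q at *
  revert h hx
  cases c x <;> cases c y <;> cases b <;> simp <;> tauto

lemma halfBall_inter_nonempty_of_dist_eq (hconn : G.Connected)
    (hc : ∀ u v, G.Adj u v → c u ≠ c v) {a a' : V} {r r' : ℕ} {b : Bool}
    (hd : G.dist a a' = r + r') (hb : c a = b ↔ Even r) :
    (halfBall G c a r b ∩ halfBall G c a' r' b).Nonempty := by
  obtain ⟨z, hz, haz⟩ :=
    exists_mem_interval_dist_eq hconn (x := a) (y := a') (s := r) (by omega)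
  simp only [interval, Set.mem_ofPred_eq] at hz
  have hcz := (color_eq_iff_of_dist_eq_add hconn hc (t := 0) haz hb).2 Even.zero
  refine ⟨z, ⟨haz.le, hcz⟩, ?_, hcz⟩
  rw [SimpleGraph.dist_comm]
  omega

lemma halfBall_inter_nonempty_of_dist_le (hconn : G.Connected)
    (hc : ∀ u v, G.Adj u v → c u ≠ c v) {u x y : V} {r : ℕ} (hr : 1 ≤ r)
    (hx : G.dist u x ≤ r) :
    (halfBall G c u r (c y) ∩ halfBall G c x (G.dist x y) (c y)).Nonempty := by
  by_cases hxy : c x = c y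
  · exact ⟨x, ⟨hx, hxy⟩, by simp, hxy⟩
  have hxy' : x ≠ y := fun h => hxy (congrArg c h)
  obtain ⟨n, hxn, hun⟩ : ∃ n, G.Adj x n ∧ G.dist u n ≤ r := by
    by_cases hxu : x = u
    · subst hxu
      obtain ⟨n, hxn, -⟩ := exists_adj_dist_eq hconn (x := x) (y := y) (k := G.dist x y - 1)
        (by have := hconn.pos_dist_of_ne hxy'; omega)
      exact ⟨n, hxn, by rw [dist_eq_one_iff_adj.2 hxn]; exact hr⟩
    · obtain ⟨n, hxn, hnu⟩ := exists_adj_dist_eq hconn (x := x) (y := u) (k := G.dist x u - 1)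
        (by have := hconn.pos_dist_of_ne hxu; omega)
      rw [SimpleGraph.dist_comm] at hnu hx
      exact ⟨n, hxn, by omega⟩
  have hcn : c n = c y := by
    have := hc _ _ hxn
    revert hxy this
    cases c x <;> cases c n <;> cases c y <;> simp
  exact ⟨n, ⟨hun, hcn⟩, (dist_eq_one_iff_adj.2 hxn).trans_le
    (Nat.one_le_iff_ne_zero.2 (hconn.pos_dist_of_ne hxy').ne'), hcn⟩

end Bipartite

def HalfBallHelly (G : SimpleGraph V) (c : V → Bool) : Prop :=
  ∀ (n : ℕ) (v : Fin n → V) (r : Fin n → ℕ) (b : Fin n → Bool),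
    (∀ i j : Fin n,
      (halfBall G c (v i) (r i) (b i) ∩ halfBall G c (v j) (r j) (b j)).Nonempty) →
    (⋂ i : Fin n, halfBall G c (v i) (r i) (b i)).Nonempty

section Helly

variable {G : SimpleGraph V} {c : V → Bool}

instance halfBall_inter_nonempty_symm (b : Bool) :
    Std.Symm fun p q : V × ℕ => (halfBall G c p.1 p.2 b ∩ halfBall G c q.1 q.2 b).Nonempty :=
  ⟨fun _ _ h => by rwa [Set.inter_comm]⟩

/-- Distinct half-balls suffice: the colour of `z` is not asserted, so a single half-ball
needs no witness. -/
lemma HalfBallHelly.exists_forall_dist_le (hH : HalfBallHelly G c) (b : Bool)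
    (S : Finset (V × ℕ))
    (hS : (S : Set (V × ℕ)).Pairwise
      fun p q => (halfBall G c p.1 p.2 b ∩ halfBall G c q.1 q.2 b).Nonempty) :
    ∃ z, ∀ p ∈ S, G.dist p.1 z ≤ p.2 := by
  rcases S.eq_empty_or_nonempty with rfl | ⟨p₀, hp₀⟩
  · obtain ⟨z, -⟩ := hH 0 Fin.elim0 Fin.elim0 Fin.elim0 fun i => i.elim0
    exact ⟨z, by simp⟩
  by_cases hS₁ : S = {p₀}
  · exact ⟨p₀.1, by simp [hS₁]⟩
  have hne : ∀ p ∈ S, (halfBall G c p.1 p.2 b).Nonempty := by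
    intro p hp
    obtain ⟨q, hq, hqp⟩ : ∃ q ∈ S, q ≠ p := by
      by_contra! h
      exact hS₁ (Finset.eq_singleton_iff_unique_mem.2
        ⟨hp₀, fun q hq => (h q hq).trans (h p₀ hp₀).symm⟩)
    exact (hS hp hq hqp.symm).mono Set.inter_subset_left
  let e := S.equivFin.symm
  obtain ⟨z, hz⟩ := hH S.card (fun i => (e i).1.1) (fun i => (e i).1.2) (fun _ => b)
      fun i j => by
    by_cases hij : i = j
    · simpa [hij] using hne _ (e j).2
    · exact hS (e i).2 (e j).2 fun h => hij (e.injective (Subtype.ext h))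
  exact ⟨z, fun p hp => by simpa using (Set.mem_iInter.1 hz (e.symm ⟨p, hp⟩)).1⟩

end Helly

section BipartiteHelly

variable {G : SimpleGraph V} {c : V → Bool}

/-- The half-balls around `v`, `a`, `b` with the Gromov products as radii pairwise meet on
geodesics; a common point `z` is a median of the triple, and the step from `v` towards `z`
approaches both `a` and `b`. -/
lemma exists_adj_dist_lt_of_notMem_interval (hconn : G.Connected)
    (hc : ∀ u v, G.Adj u v → c u ≠ c v) (hH : HalfBallHelly G c) {v a b : V}
    (hv : v ∉ interval G a b) :
    ∃ w, G.Adj v w ∧ G.dist w a < G.dist v a ∧ G.dist w b < G.dist v b := by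
  classical
  simp only [interval, Set.mem_ofPred_eq] at hv
  have e₁ : G.dist a v = G.dist v a := SimpleGraph.dist_comm
  have e₂ : G.dist b a = G.dist a b := SimpleGraph.dist_comm
  have t₁ : G.dist a b ≤ G.dist a v + G.dist v b := hconn.dist_triangle
  have t₂ : G.dist v a ≤ G.dist v b + G.dist b a := hconn.dist_triangle
  have t₃ : G.dist v b ≤ G.dist v a + G.dist a b := hconn.dist_triangle
  obtain ⟨rv, ra, rb, hva, hvb, hab, hrv⟩ : ∃ rv ra rb, G.dist v a = rv + ra ∧
      G.dist v b = rv + rb ∧ G.dist a b = ra + rb ∧ 0 < rv := by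
    obtain ⟨k, hk⟩ := even_dist_add_dist_add_dist hconn hc v a b
    exact ⟨k - G.dist a b, k - G.dist v b, k - G.dist v a,
      by omega, by omega, by omega, by omega⟩
  set β := if Even rv then c v else !c v
  have hβ : c v = β ↔ Even rv := by by_cases h : Even rv <;> simp [β, h]
  obtain ⟨z, hz⟩ := hH.exists_forall_dist_le β {(v, rv), (a, ra), (b, rb)} (by
    simp only [Finset.coe_insert, Finset.coe_singleton, Set.pairwise_insert_of_symm,
      Set.pairwise_singleton, Set.mem_insert_iff, Set.mem_singleton_iff, forall_eq_or_imp,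
      forall_eq, true_and]
    exact ⟨fun _ => halfBall_inter_nonempty_of_dist_eq hconn hc hab
        (color_eq_iff_of_dist_eq_add hconn hc hva hβ),
      fun _ => halfBall_inter_nonempty_of_dist_eq hconn hc hva hβ,
      fun _ => halfBall_inter_nonempty_of_dist_eq hconn hc hvb hβ⟩)
  simp only [Finset.mem_insert, Finset.mem_singleton, forall_eq_or_imp, forall_eq] at hz
  obtain ⟨hvz, haz, hbz⟩ := hz
  have e₃ : G.dist z a = G.dist a z := SimpleGraph.dist_comm
  have e₄ : G.dist z b = G.dist b z := SimpleGraph.dist_comm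
  have t₄ : G.dist v a ≤ G.dist v z + G.dist z a := hconn.dist_triangle
  have t₅ : G.dist v b ≤ G.dist v z + G.dist z b := hconn.dist_triangle
  obtain ⟨w, hvw, hwz⟩ := exists_adj_dist_eq hconn (x := v) (y := z) (k := rv - 1) (by omega)
  have t₆ : G.dist w a ≤ G.dist w z + G.dist z a := hconn.dist_triangle
  have t₇ : G.dist w b ≤ G.dist w z + G.dist z b := hconn.dist_triangle
  exact ⟨w, hvw, by omega, by omega⟩

lemma mem_interval_iff_not_exists_adj (hconn : G.Connected)
    (hc : ∀ u v, G.Adj u v → c u ≠ c v) (hH : HalfBallHelly G c) {v a b : V} :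
    v ∈ interval G a b ↔
      ¬∃ w, G.Adj v w ∧ G.dist w a < G.dist v a ∧ G.dist w b < G.dist v b := by
  refine ⟨?_, fun h => by_contra fun hv =>
    h (exists_adj_dist_lt_of_notMem_interval hconn hc hH hv)⟩
  rintro hv ⟨w, hvw, hwa, hwb⟩
  have : G.dist a b ≤ G.dist a w + G.dist w b := hconn.dist_triangle
  have e₁ : G.dist a w = G.dist w a := SimpleGraph.dist_comm
  have e₂ : G.dist a v = G.dist v a := SimpleGraph.dist_comm
  simp only [interval, Set.mem_ofPred_eq] at hv
  omega

lemma dist_induce_ball (hconn : G.Connected) (hc : ∀ u v, G.Adj u v → c u ≠ c v)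
    (hH : HalfBallHelly G c) (u : V) (r : ℕ) (x y : {x | G.dist u x ≤ r}) :
    (G.induce {x | G.dist u x ≤ r}).dist x y = G.dist x y := by
  refine dist_induce_eq_of_exists_adj hconn (fun x hx y hy k hxy => ?_) x y
  simp only [Set.mem_ofPred_eq] at hx hy ⊢
  by_cases hxI : x ∈ interval G u y
  · obtain ⟨z, hxz, hzy⟩ := exists_adj_dist_eq hconn hxy
    have : G.dist u z ≤ G.dist u x + G.dist x z := hconn.dist_triangle
    simp only [interval, Set.mem_ofPred_eq] at hxI
    rw [dist_eq_one_iff_adj.2 hxz] at this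
    exact ⟨z, by omega, hxz, hzy⟩
  · obtain ⟨z, hxz, hzu, hzy⟩ := exists_adj_dist_lt_of_notMem_interval hconn hc hH hxI
    have : G.dist x y ≤ G.dist x z + G.dist z y := hconn.dist_triangle
    have e₁ : G.dist z u = G.dist u z := SimpleGraph.dist_comm
    have e₂ : G.dist x u = G.dist u x := SimpleGraph.dist_comm
    rw [dist_eq_one_iff_adj.2 hxz] at this
    exact ⟨z, by omega, hxz, by omega⟩

/-- The half-balls of radius `1` around the neighbours of `v` closer to `x` meet pairwise at
`v`, and each of them, like `B_2(v)`, meets `B_{d(v,x) - 2}(x)` on a geodesic. -/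
lemma exists_mem_interval_gate_preserving [Fintype V] (hconn : G.Connected)
    (hc : ∀ u v, G.Adj u v → c u ≠ c v) (hH : HalfBallHelly G c) (v x : V) :
    ∃ p ∈ interval G v x, G.dist v p ≤ 2 ∧
      ∀ w, G.Adj v w → G.dist w x < G.dist v x → G.dist w p < G.dist v p := by
  classical
  by_cases hx : G.dist v x ≤ 2
  · exact ⟨x, by simp [interval], hx, fun _ _ h => h⟩
  set d := G.dist v x
  let gates := {w | G.Adj v w ∧ G.dist w x < d}.toFinset
  have hgate : ∀ w ∈ gates,
      G.dist w v ≤ 1 ∧ G.dist w x = 1 + (d - 2) ∧ (c w = c v ↔ Even 1) := by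
    intro w hw
    simp only [gates, Set.mem_toFinset, Set.mem_ofPred_eq] at hw
    have hvw := dist_eq_one_iff_adj.2 hw.1
    have : d ≤ G.dist v w + G.dist w x := hconn.dist_triangle
    refine ⟨(SimpleGraph.dist_comm.trans hvw).le, by omega, ?_⟩
    rw [eq_comm, color_eq_iff_even_dist hconn hc, hvw]
  have hcv : c v = c v ↔ Even 2 := iff_of_true rfl even_two
  obtain ⟨p, hp⟩ := hH.exists_forall_dist_le (c v)
      (insert (v, 2) (insert (x, d - 2) (gates.image fun w => (w, 1)))) (by
    have hv : ∀ w ∈ gates, v ∈ halfBall G c w 1 (c v) := fun w hw => ⟨(hgate w hw).1, rfl⟩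
    simp only [Finset.coe_insert, Finset.coe_image, Set.pairwise_insert_of_symm,
      Set.mem_insert_iff, Set.mem_image, Finset.mem_coe, forall_eq_or_imp,
      forall_exists_index, and_imp, forall_apply_eq_imp_iff₂]
    refine ⟨⟨?_, fun w hw _ => ?_⟩, fun _ => ?_, fun w hw _ => ?_⟩
    · rintro _ ⟨w, hw, rfl⟩ _ ⟨w', hw', rfl⟩ -
      exact ⟨v, hv w hw, hv w' hw'⟩
    · rw [Set.inter_comm]
      exact halfBall_inter_nonempty_of_dist_eq hconn hc (hgate w hw).2.1 (hgate w hw).2.2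
    · exact halfBall_inter_nonempty_of_dist_eq hconn hc (by omega) hcv
    · exact ⟨v, ⟨by simp, rfl⟩, hv w hw⟩)
  simp only [Finset.mem_insert, Finset.mem_image, forall_eq_or_imp, forall_exists_index,
    and_imp, forall_apply_eq_imp_iff₂] at hp
  obtain ⟨hvp, hxp, hwp⟩ := hp
  have : d ≤ G.dist v p + G.dist p x := hconn.dist_triangle
  have e : G.dist p x = G.dist x p := SimpleGraph.dist_comm
  refine ⟨p, by simp only [interval, Set.mem_ofPred_eq]; omega, hvp, fun w hvw hwx => ?_⟩
  have := hwp w (by simp [gates, hvw, hwx])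
  omega

lemma exists_mem_ball_forall_dist_le (hconn : G.Connected)
    (hc : ∀ u v, G.Adj u v → c u ≠ c v) (hH : HalfBallHelly G c) {u : V} {r : ℕ}
    (hr : 1 ≤ r)
    {π : Multiset V} (hπ : ∀ x ∈ π, G.dist u x ≤ r) (y : V) :
    ∃ z, G.dist u z ≤ r ∧ ∀ x ∈ π, G.dist z x ≤ G.dist y x := by
  classical
  obtain ⟨z, hz⟩ := hH.exists_forall_dist_le (c y)
      (insert (u, r) (π.toFinset.image fun x => (x, G.dist x y))) (by
    simp only [Finset.coe_insert, Finset.coe_image, Set.pairwise_insert_of_symm,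
      Set.mem_image, Finset.mem_coe, Multiset.mem_toFinset, forall_exists_index, and_imp,
      forall_apply_eq_imp_iff₂]
    refine ⟨?_, fun x hx _ => halfBall_inter_nonempty_of_dist_le hconn hc hr (hπ x hx)⟩
    rintro _ ⟨x, -, rfl⟩ _ ⟨x', -, rfl⟩ -
    exact ⟨y, ⟨le_rfl, rfl⟩, le_rfl, rfl⟩)
  simp only [Finset.mem_insert, Finset.mem_image, Multiset.mem_toFinset, forall_eq_or_imp,
    forall_exists_index, and_imp, forall_apply_eq_imp_iff₂] at hz
  refine ⟨z, hz.1, fun x hx => ?_⟩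
  rw [SimpleGraph.dist_comm, SimpleGraph.dist_comm (u := y)]
  exact hz.2 x hx

end BipartiteHelly

section Pairing

variable {α β : Type*}

lemma IsPairing.map {π : Multiset α} {P : Multiset (α × α)} (hP : IsPairing π P)
    (f : α → β) :
    IsPairing (π.map f) (P.map (Prod.map f f)) := by
  rw [IsPairing, ← hP, Multiset.map_add, Multiset.map_map, Multiset.map_map, Multiset.map_map,
    Multiset.map_map]
  rfl

lemma IsPairing.exists_of_map (f : α → β) {P' : Multiset (β × β)} :
    ∀ {π : Multiset α}, IsPairing (π.map f) P' →
      ∃ P, IsPairing π P ∧ P.map (Prod.map f f) = P' := by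
  classical
  induction P' using Multiset.induction with
  | empty =>
    intro π h
    obtain rfl : π = 0 := by simpa [IsPairing, eq_comm] using h
    exact ⟨0, by simp [IsPairing], rfl⟩
  | cons q Q ih =>
    intro π h
    unfold IsPairing at h
    rw [Multiset.map_cons, Multiset.map_cons, Multiset.cons_add] at h
    obtain ⟨a, ha, hfa, h₂⟩ := (Multiset.map_eq_cons f π _ q.1).2 h.symm
    rw [Multiset.add_cons] at h₂
    obtain ⟨b, hb, hfb, h₃⟩ := (Multiset.map_eq_cons f _ _ q.2).2 h₂
    obtain ⟨P, hP, rfl⟩ := ih h₃.symm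
    refine ⟨(a, b) ::ₘ P, ?_, by simp [hfa, hfb]⟩
    rw [IsPairing, Multiset.map_cons, Multiset.map_cons, Multiset.cons_add, Multiset.add_cons,
      hP, Multiset.cons_erase hb, Multiset.cons_erase ha]

variable {G : SimpleGraph V} {π : Multiset V} {P : Multiset (V × V)}

lemma cost_eq_sum_of_isPairing (hP : IsPairing π P) (v : V) :
    cost G π v = (P.map fun q => G.dist q.1 v + G.dist v q.2).sum := by
  rw [← hP, cost, Multiset.map_add, Multiset.sum_add, Multiset.sum_map_add, Multiset.map_map,
    Multiset.map_map]
  simp only [Function.comp_def, SimpleGraph.dist_comm (u := v)]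

lemma pairingCost_le_cost (hconn : G.Connected) (hP : IsPairing π P) (v : V) :
    pairingCost G P ≤ cost G π v :=
  (cost_eq_sum_of_isPairing hP v).symm ▸
    Multiset.sum_map_le_sum_map _ _ fun _ _ => hconn.dist_triangle

lemma pairingCost_eq_cost_iff (hconn : G.Connected) (hP : IsPairing π P) (v : V) :
    pairingCost G P = cost G π v ↔ ∀ q ∈ P, v ∈ interval G q.1 q.2 := by
  have hle : ∀ q ∈ P, G.dist q.1 q.2 ≤ G.dist q.1 v + G.dist v q.2 :=
    fun _ _ => hconn.dist_triangle
  rw [cost_eq_sum_of_isPairing hP, pairingCost]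
  refine ⟨fun h q hq => by_contra fun hv => ?_,
    fun h => congrArg Multiset.sum (Multiset.map_congr rfl fun q hq => (h q hq).symm)⟩
  exact (Multiset.sum_lt_sum hle ⟨q, hq, (hle q hq).lt_of_ne (Ne.symm hv)⟩).ne h

end Pairing

section Transfer

variable {G : SimpleGraph V} {c : V → Bool}

lemma HasPerfectPairing.of_induce {s : Set V}
    (hs : ∀ x y : s, (G.induce s).dist x y = G.dist x y) {σ : Multiset s}
    (h : HasPerfectPairing (G.induce s) σ) : HasPerfectPairing G (σ.map (↑)) := by
  obtain ⟨Q, z, hQ, hz⟩ := h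
  refine ⟨Q.map (Prod.map (↑) (↑)), z, hQ.map _, ?_⟩
  simp only [pairingCost, cost, Multiset.map_map] at hz ⊢
  simpa only [Function.comp_def, Prod.map_fst, Prod.map_snd, hs] using hz

lemma HasPerfectPairing.induce {s : Set V}
    (hs : ∀ x y : s, (G.induce s).dist x y = G.dist x y) {σ : Multiset s}
    {P : Multiset (V × V)} (hP : IsPairing (σ.map (↑)) P) {z : V} (hz : z ∈ s)
    (h : pairingCost G P = cost G (σ.map (↑)) z) : HasPerfectPairing (G.induce s) σ := by
  obtain ⟨Q, hQ, rfl⟩ := hP.exists_of_map _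
  refine ⟨Q, ⟨z, hz⟩, hQ, ?_⟩
  simp only [pairingCost, cost, Multiset.map_map] at h ⊢
  simpa only [Function.comp_def, Prod.map_fst, Prod.map_snd, hs] using h

lemma HasPerfectPairing.induce_ball (hconn : G.Connected)
    (hc : ∀ u v, G.Adj u v → c u ≠ c v) (hH : HalfBallHelly G c) {u : V} {r : ℕ}
    (hr : 1 ≤ r) {σ : Multiset {x | G.dist u x ≤ r}} (h : HasPerfectPairing G (σ.map (↑))) :
    HasPerfectPairing (G.induce {x | G.dist u x ≤ r}) σ := by
  obtain ⟨P, y, hP, hy⟩ := h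
  obtain ⟨z, hz, hzy⟩ := exists_mem_ball_forall_dist_le hconn hc hH hr (π := σ.map (↑))
    (by simpa using fun x hx _ => hx) y
  refine .induce (dist_induce_ball hconn hc hH u r) hP hz
    (le_antisymm (pairingCost_le_cost hconn hP z) ?_)
  exact hy ▸ Multiset.sum_map_le_sum_map _ _ hzy

/-- `v` is also a median of `π.map p`, so it lies between the images of each pair, and by
`hgate` between the pair itself. -/
lemma HasPerfectPairing.of_map (hconn : G.Connected) (hc : ∀ u v, G.Adj u v → c u ≠ c v)
    (hH : HalfBallHelly G c) {π : Multiset V} {v : V} (hv : v ∈ median G π) {p : V → V}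
    (hpv : ∀ x, p x ∈ interval G v x)
    (hgate : ∀ x w, G.Adj v w → G.dist w x < G.dist v x → G.dist w (p x) < G.dist v (p x))
    (h : HasPerfectPairing G (π.map p)) : HasPerfectPairing G π := by
  obtain ⟨P', z, hP', hz⟩ := h
  have hdetour : ∀ w,
      cost G π w ≤ cost G (π.map p) w + (π.map fun x => G.dist (p x) x).sum :=
    fun w => by
      rw [cost, cost, Multiset.map_map, ← Multiset.sum_map_add]
      exact Multiset.sum_map_le_sum_map _ _ fun x _ => hconn.dist_triangle
  have hdetour_v : cost G π v = cost G (π.map p) v + (π.map fun x => G.dist (p x) x).sum := by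
    rw [cost, cost, Multiset.map_map, ← Multiset.sum_map_add]
    exact congrArg _ (Multiset.map_congr rfl fun x _ => (hpv x).symm)
  have hv' : pairingCost G P' = cost G (π.map p) v :=
    le_antisymm (pairingCost_le_cost hconn hP' v) (by have := hv z; have := hdetour z; omega)
  have hI := (pairingCost_eq_cost_iff hconn hP' v).1 hv'
  obtain ⟨P, hP, rfl⟩ := hP'.exists_of_map p
  refine ⟨P, v, hP, (pairingCost_eq_cost_iff hconn hP v).2 fun q hq => ?_⟩
  have hq' := hI _ (Multiset.mem_map_of_mem _ hq)
  rw [mem_interval_iff_not_exists_adj hconn hc hH] at hq' ⊢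
  rintro ⟨w, hvw, h₁, h₂⟩
  exact hq' ⟨w, hvw, hgate _ _ hvw h₁, hgate _ _ hvw h₂⟩

lemma exists_ball_reduction [Fintype V] (hconn : G.Connected)
    (hc : ∀ u v, G.Adj u v → c u ≠ c v) (hH : HalfBallHelly G c) (π : Multiset V) :
    ∃ (v : V) (p : V → {x | G.dist v x ≤ 2}),
      HasPerfectPairing (G.induce {x | G.dist v x ≤ 2}) (π.map p) →
        HasPerfectPairing G π := by
  have : Nonempty V := hconn.nonempty
  obtain ⟨v, -, hv⟩ := Finset.exists_min_image Finset.univ (cost G π) Finset.univ_nonempty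
  choose p hpv hp₂ hgate using exists_mem_interval_gate_preserving hconn hc hH v
  refine ⟨v, fun x => ⟨p x, hp₂ x⟩, fun h => ?_⟩
  refine .of_map hconn hc hH (fun w => hv w (Finset.mem_univ w)) hpv hgate ?_
  simpa [Multiset.map_map, Function.comp_def] using h.of_induce (dist_induce_ball hconn hc hH v 2)

end Transfer

/-- Corollary 31 (local-to-global): a bipartite Helly graph satisfies the pairing
property (resp. the double-pairing property) iff every subgraph induced by a ball of
radius 2 (with its own shortest-path metric) satisfies the pairing property
(resp. the double-pairing property). -/
theorem stmt_17 [Fintype V] (G : SimpleGraph V) (hG : IsBipartiteHelly G) :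
    (PairingProperty G ↔
      ∀ u : V, PairingProperty (G.induce {x : V | G.dist u x ≤ 2})) ∧
    (DoublePairingProperty G ↔
      ∀ u : V, DoublePairingProperty (G.induce {x : V | G.dist u x ≤ 2})) := by
  obtain ⟨hconn, c, hc, hH⟩ := hG
  have toBall : ∀ (u : V) (σ : Multiset {x | G.dist u x ≤ 2}),
      HasPerfectPairing G (σ.map (↑)) →
        HasPerfectPairing (G.induce {x | G.dist u x ≤ 2}) σ :=
    fun _ _ => HasPerfectPairing.induce_ball hconn hc hH one_le_two
  refine ⟨⟨fun h u σ hσ => toBall u σ (h _ (by rwa [Multiset.card_map])),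
      fun h π hπ => ?_⟩,
    ⟨fun h u σ => toBall u _ (by simpa only [Multiset.map_add] using h (σ.map (↑))),
      fun h π => ?_⟩⟩
  · obtain ⟨v, p, hp⟩ := exists_ball_reduction hconn hc hH π
    exact hp (h v _ (by rwa [Multiset.card_map]))
  · obtain ⟨v, p, hp⟩ := exists_ball_reduction hconn hc hH (π + π)
    exact hp (by simpa only [Multiset.map_add] using h v (π.map p))

end ArxivABC
end

section
/- On the 6-cycle C_6 there exists an ABC-function L that differs from the median function Med; in particular, C_6 is not an ABC-graph. (For instance, L may be taken to agree with Med on every profile π unless the reduced profile π° — obtained by cancelling, for each antipodal pair v_i, v_{i+3}, min{π(v_i), π(v_{i+3})} occurrences of each — has all three of π°(v_i), π°(v_{i+2}), π°(v_{i+4}) positive for some i, in which case L(π) = {v_i} where i is the smallest index achieving max{π°(v_i), π°(v_{i+2}), π°(v_{i+4})}.) -/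
namespace ArxivABC

variable {V : Type*}

/-- The 6-cycle on vertices `0, 1, …, 5` (as `ZMod 6`), `i ∼ i ± 1`. -/
def C6 : SimpleGraph (ZMod 6) where
  Adj i j := j = i + 1 ∨ i = j + 1
  symm := ⟨by intro i j h; exact h.symm⟩
  loopless := ⟨by intro i h; revert h; revert i; decide⟩


/-! ### Auxiliary material for the proof -/

/-- Explicit distance function on the 6-cycle. -/
def D (u v : ZMod 6) : ℕ := min (v - u).val (u - v).val

lemma C6_adj_step (i : ZMod 6) : C6.Adj i (i + 1) := Or.inl rfl

lemma C6_dist_step (i : ZMod 6) : C6.dist i (i + 1) ≤ 1 := by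
  simpa using SimpleGraph.dist_le (C6_adj_step i).toWalk

/-- A walk of length 2 from `i` to `i + 2`. -/
def w2 (i : ZMod 6) : C6.Walk i (i + 2) :=
  ((C6_adj_step i).toWalk.append ((C6_adj_step (i + 1)).toWalk.copy rfl (by ring)))

/-- A walk of length 3 from `i` to `i + 3`. -/
def w3 (i : ZMod 6) : C6.Walk i (i + 3) :=
  ((w2 i).append ((C6_adj_step (i + 2)).toWalk.copy rfl (by ring)))

lemma C6_dist_two (i : ZMod 6) : C6.dist i (i + 2) ≤ 2 := by
  have h := SimpleGraph.dist_le (w2 i)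
  simpa [w2, SimpleGraph.Adj.toWalk] using h

lemma C6_dist_three (i : ZMod 6) : C6.dist i (i + 3) ≤ 3 := by
  have h := SimpleGraph.dist_le (w3 i)
  simpa [w3, w2, SimpleGraph.Adj.toWalk] using h

lemma D_shift (u c : ZMod 6) : D u (u + c) = min c.val (-c).val := by
  have h1 : u + c - u = c := by ring
  have h2 : u - (u + c) = -c := by ring
  simp only [D, h1, h2]

lemma C6_dist_le_D (u v : ZMod 6) : C6.dist u v ≤ D u v := by
  have hv : v = u + (v - u) := by ring
  rw [hv]
  generalize v - u = c
  fin_cases c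
  · show C6.dist u (u + 0) ≤ D u (u + 0)
    simp [SimpleGraph.dist_self]
  · show C6.dist u (u + 1) ≤ D u (u + 1)
    rw [D_shift]
    exact le_trans (C6_dist_step u) (by decide)
  · show C6.dist u (u + 2) ≤ D u (u + 2)
    rw [D_shift]
    exact le_trans (C6_dist_two u) (by decide)
  · show C6.dist u (u + 3) ≤ D u (u + 3)
    rw [D_shift]
    exact le_trans (C6_dist_three u) (by decide)
  · show C6.dist u (u + 4) ≤ D u (u + 4)
    rw [D_shift]
    have h := C6_dist_two (u + 4)
    have e : (4 : ZMod 6) + 2 = 0 := by decide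
    rw [add_assoc, e, add_zero] at h
    rw [C6.dist_comm]
    exact le_trans h (by decide)
  · show C6.dist u (u + 5) ≤ D u (u + 5)
    rw [D_shift]
    have h := C6_dist_step (u + 5)
    have e : (5 : ZMod 6) + 1 = 0 := by decide
    rw [add_assoc, e, add_zero] at h
    rw [C6.dist_comm]
    exact le_trans h (by decide)

instance : DecidableRel C6.Adj := fun i j =>
  inferInstanceAs (Decidable (j = i + 1 ∨ i = j + 1))

lemma D_step : ∀ v w u : ZMod 6, C6.Adj v w → D v u ≤ D w u + 1 := by decide

lemma D_le_walk_length {v u : ZMod 6} (p : C6.Walk v u) : D v u ≤ p.length := by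
  induction p with
  | nil => simp [D]
  | cons h q ih =>
      rename_i x y z
      have hs := D_step x y z h
      simp only [SimpleGraph.Walk.length_cons]
      omega

lemma C6_reachable (u v : ZMod 6) : C6.Reachable u v := by
  have key : ∀ (n : ℕ) (u : ZMod 6), C6.Reachable u (u + (n : ZMod 6)) := by
    intro n
    induction n with
    | zero =>
        intro u
        simp only [Nat.cast_zero, add_zero]
        exact SimpleGraph.Reachable.refl u
    | succ m ih =>
        intro u
        have h1 := ih u
        have h2 : C6.Reachable (u + (m : ZMod 6)) (u + ((m + 1 : ℕ) : ZMod 6)) := by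
          have e : (((m + 1 : ℕ)) : ZMod 6) = (m : ZMod 6) + 1 := by push_cast; ring
          rw [e, ← add_assoc]
          exact (C6_adj_step (u + (m : ZMod 6))).reachable
        exact h1.trans h2
  have h := key (v - u).val u
  rwa [ZMod.natCast_val, ZMod.cast_id, add_sub_cancel] at h

lemma C6_dist_eq (u v : ZMod 6) : C6.dist u v = D u v := by
  refine le_antisymm (C6_dist_le_D u v) ?_
  obtain ⟨p, hp⟩ := (C6_reachable u v).exists_walk_length_eq_dist
  calc D u v ≤ p.length := D_le_walk_length p
    _ = C6.dist u v := hp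

/-- The perturbation matrix. -/
def F : ZMod 6 → ZMod 6 → ℕ :=
  ![![3, 3, 3, 1, 1, 1],
    ![4, 2, 2, 0, 2, 2],
    ![4, 2, 2, 0, 2, 2],
    ![3, 1, 1, 1, 3, 3],
    ![2, 2, 2, 2, 2, 2],
    ![2, 2, 2, 2, 2, 2]]

/-- The perturbed cost of a single vertex. -/
def pc (v x : ZMod 6) : ℕ := 100 * D v x + F v x

/-- Total perturbed cost of a profile. -/
def pcost (π : Multiset (ZMod 6)) (v : ZMod 6) : ℕ := (π.map (pc v)).sum

/-- The alternative consensus function. -/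
def Lfun (π : Multiset (ZMod 6)) : Set (ZMod 6) := {v | ∀ w, pcost π v ≤ pcost π w}

lemma pcost_add (π ρ : Multiset (ZMod 6)) (v : ZMod 6) :
    pcost (π + ρ) v = pcost π v + pcost ρ v := by
  simp [pcost]

lemma Lfun_nonempty (π : Multiset (ZMod 6)) : (Lfun π).Nonempty := by
  obtain ⟨v, -, hv⟩ := Finset.exists_min_image (Finset.univ : Finset (ZMod 6))
    (pcost π) ⟨0, Finset.mem_univ 0⟩
  exact ⟨v, fun w => hv w (Finset.mem_univ w)⟩

lemma Lfun_betweenness_key :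
    ∀ u v w : ZMod 6, (∀ w' : ZMod 6, pc w u + pc w v ≤ pc w' u + pc w' v) ↔
      D u w + D w v = D u v := by decide

/-- Proposition 36: the 6-cycle `C₆` admits an ABC-function different from the median
function; in particular, `C₆` is not an ABC-graph. -/
theorem stmt_18 :
    ∃ L : Multiset (ZMod 6) → Set (ZMod 6), IsABC C6 L ∧ L ≠ median C6 := by
  refine ⟨Lfun, ⟨Lfun_nonempty, ?_, ?_⟩, ?_⟩
  · -- betweenness
    intro u v
    ext w
    show (∀ w', pcost {u, v} w ≤ pcost {u, v} w') ↔ _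
    have hpc : ∀ z : ZMod 6, pcost {u, v} z = pc z u + pc z v := by
      intro z
      simp [pcost, Multiset.insert_eq_cons]
    simp only [hpc]
    rw [Lfun_betweenness_key u v w]
    show _ ↔ C6.dist u w + C6.dist w v = C6.dist u v
    rw [C6_dist_eq, C6_dist_eq, C6_dist_eq]
  · -- consistency
    rintro π ρ ⟨v₀, hπ, hρ⟩
    ext v
    simp only [Set.mem_inter_iff]
    constructor
    · intro hv
      have h := hv v₀
      rw [pcost_add, pcost_add] at h
      have h2 := hπ v
      have h3 := hρ v
      have k1 : pcost π v ≤ pcost π v₀ := by omega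
      have k2 : pcost ρ v ≤ pcost ρ v₀ := by omega
      exact ⟨fun w => le_trans k1 (hπ w), fun w => le_trans k2 (hρ w)⟩
    · rintro ⟨h1, h2⟩ w
      rw [pcost_add, pcost_add]
      exact add_le_add (h1 w) (h2 w)
  · -- differs from median
    intro h
    have h2 : (2 : ZMod 6) ∈ Lfun {0, 2, 4} ↔ (2 : ZMod 6) ∈ median C6 {0, 2, 4} := by
      rw [h]
    have hmed : (2 : ZMod 6) ∈ median C6 {0, 2, 4} := by
      show ∀ w, cost C6 {0, 2, 4} 2 ≤ cost C6 {0, 2, 4} w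
      intro w
      simp only [cost, Multiset.insert_eq_cons, Multiset.map_cons, Multiset.map_singleton,
        Multiset.sum_cons, Multiset.sum_singleton, C6_dist_eq]
      revert w; decide
    have hL : (2 : ZMod 6) ∉ Lfun {0, 2, 4} := by
      intro hc
      have hcc := hc 4
      simp only [pcost, Multiset.insert_eq_cons, Multiset.map_cons, Multiset.map_singleton,
        Multiset.sum_cons, Multiset.sum_singleton] at hcc
      revert hcc; decide
    exact hL (h2.mpr hmed)

end ArxivABC
end
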